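/- arXiv:1009.4036 — 7 statements merged into one kernel-verified Lean document; each statement's English description precedes it below -/
import Mathlib

section
/- The Gram matrix determinant D_k(n) = det(G_{kn}), where G_{kn}(π,σ) = n^{|π∨σ|} for partitions π,σ of {1,...,k}, is a monic polynomial in n of degree s_k = Σ_{π ∈ P(k)} |π|, where |π| denotes the number of blocks and π∨σ is the join in the partition lattice. -/
/-!
Expanding the determinant over permutations `σ` of `P(k)`, the term of `σ` is
`± n ^ ∑_π |σ π ∨ π|`. The block count is strictly antitone, so every exponent is at most
`s_k = ∑_π |π|`, with equality only if `σ π ≤ π` for all `π`; a permutation of a finite poset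
that moves every point down is the identity. Hence `n ^ s_k` is contributed by `σ = 1` alone.
-/

open Finset Polynomial

/-- A set partition of `{1,…,k}` is encoded as a `Setoid (Fin k)`; the join `⊔` in the
lattice of setoids is exactly the join in the partition lattice. -/
noncomputable instance setoidFintype {k : ℕ} : Fintype (Setoid (Fin k)) := by
  have : Finite (Setoid (Fin k)) :=
    Finite.of_injective (fun s => s.r)
      (fun s t h => Setoid.ext (fun a b => by rw [show s.r = t.r from h]))
  exact Fintype.ofFinite _

noncomputable instance setoidDecEq {k : ℕ} : DecidableEq (Setoid (Fin k)) := Classical.decEq _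

noncomputable instance setoidSubtypeFintype {k : ℕ} {p : Setoid (Fin k) → Prop} :
    Fintype {π : Setoid (Fin k) // p π} := Fintype.ofFinite _

/-- The number of blocks of a set partition. -/
noncomputable def nblocks {k : ℕ} (π : Setoid (Fin k)) : ℕ := Nat.card (Quotient π)

theorem Setoid.natCard_quotient_strictAnti {α : Type*} [Finite α] :
    StrictAnti fun r : Setoid α => Nat.card (Quotient r) := by
  intro r s hrs
  let f : Quotient r → Quotient s := Quotient.map id hrs.le
  have hf : f.Surjective := Quotient.map_surjective _ Function.surjective_id
  refine (Nat.card_le_card_of_surjective f hf).lt_of_ne fun hcard => hrs.ne ?_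
  have hinj := ((Nat.bijective_iff_surjective_and_card f).2 ⟨hf, hcard.symm⟩).1
  exact le_antisymm hrs.le fun a b hab => Quotient.exact (hinj (Quotient.sound hab))

theorem nblocks_strictAnti {k : ℕ} : StrictAnti (nblocks (k := k)) :=
  Setoid.natCard_quotient_strictAnti

theorem Equiv.Perm.eq_one_of_forall_apply_le {α : Type*} [Finite α] [PartialOrder α]
    {σ : Equiv.Perm α} (h : ∀ a, σ a ≤ a) : σ = 1 := by
  have hpow : ∀ n a, (σ ^ n) a ≤ a := by
    intro n
    induction n with
    | zero => simp
    | succ n ih => intro a; rw [pow_succ', Equiv.Perm.mul_apply]; exact (h _).trans (ih a)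
  obtain ⟨m, hm⟩ := Nat.exists_eq_add_one_of_ne_zero (orderOf_pos σ).ne'
  ext a
  refine le_antisymm (h a) ?_
  calc a = (σ ^ (m + 1)) a := by rw [← hm, pow_orderOf_eq_one]; rfl
    _ = (σ ^ m) (σ a) := by rw [pow_succ, Equiv.Perm.mul_apply]
    _ ≤ σ a := hpow m (σ a)

theorem StrictAnti.sum_perm_sup_lt {α : Type*} [Fintype α] [SemilatticeSup α] {f : α → ℕ}
    (hf : StrictAnti f) {σ : Equiv.Perm α} (hσ : σ ≠ 1) :
    ∑ a, f (σ a ⊔ a) < ∑ a, f a := by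
  have hle : ∀ a ∈ univ, f (σ a ⊔ a) ≤ f a := fun a _ => hf.antitone le_sup_right
  refine (sum_le_sum hle).lt_of_ne fun heq => hσ (Equiv.Perm.eq_one_of_forall_apply_le fun a => ?_)
  have hfa := (sum_eq_sum_iff_of_le hle).1 heq a (mem_univ a)
  have hsup : a = σ a ⊔ a := le_sup_right.eq_of_not_lt fun hlt => (hf hlt).ne hfa
  exact le_sup_left.trans_eq hsup.symm

theorem Polynomial.isMonicOfDegree_det_X_pow {n R : Type*} [Fintype n] [DecidableEq n]
    [CommRing R] [Nontrivial R] (d : n → n → ℕ)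
    (hd : ∀ σ : Equiv.Perm n, σ ≠ 1 → ∑ i, d (σ i) i < ∑ i, d i i) :
    IsMonicOfDegree (Matrix.of fun i j => (X : R[X]) ^ d i j).det (∑ i, d i i) := by
  have hdet : (Matrix.of fun i j => (X : R[X]) ^ d i j).det =
      ∑ σ : Equiv.Perm n, (Equiv.Perm.sign σ : ℤ) • X ^ ∑ i, d (σ i) i := by
    simp only [Matrix.det_apply, Matrix.of_apply, prod_pow_eq_pow_sum, Units.smul_def]
  have hle : ∀ σ : Equiv.Perm n, ∑ i, d (σ i) i ≤ ∑ i, d i i := by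
    intro σ
    rcases eq_or_ne σ 1 with rfl | hσ
    · rfl
    · exact (hd σ hσ).le
  rw [isMonicOfDegree_iff, hdet]
  constructor
  · refine natDegree_sum_le_of_forall_le _ _ fun σ _ => ?_
    exact (natDegree_smul_le _ _).trans ((natDegree_X_pow_le _).trans (hle σ))
  · rw [finsetSum_coeff, sum_eq_single 1]
    · simp
    · intro σ _ hσ
      simp [coeff_X_pow, (hd σ hσ).ne']
    · simp

/-- The Gram determinant `D_k(n) = det(n^{|π∨σ|})` is a monic polynomial in `n`
of degree `s_k = Σ_{π ∈ P(k)} |π|`. -/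
theorem gram_det_monic_of_degree_sum_blocks (k : ℕ) :
    (Matrix.det (Matrix.of fun π σ : Setoid (Fin k) =>
        (X : ℤ[X]) ^ nblocks (π ⊔ σ))).Monic ∧
    (Matrix.det (Matrix.of fun π σ : Setoid (Fin k) =>
        (X : ℤ[X]) ^ nblocks (π ⊔ σ))).natDegree = ∑ π : Setoid (Fin k), nblocks π := by
  have h := isMonicOfDegree_det_X_pow (R := ℤ) (fun π σ : Setoid (Fin k) => nblocks (π ⊔ σ))
    fun σ hσ => by simpa only [sup_idem] using nblocks_strictAnti.sum_perm_sup_lt hσ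
  simp only [sup_idem] at h
  exact ⟨h.monic, h.natDegree_eq⟩
end

section
/- The determinant of the Gram matrix G_{kn}(π,σ) = n^{|π∨σ|}, indexed by all set partitions of {1,...,k}, equals the product over all partitions π of {1,...,k} of the falling factorial n(n-1)⋯(n-|π|+1) = n!/(n-|π|)!. -/
/-!
Sorting the maps from the blocks of `σ` to an `n`-set by their kernels gives
`n ^ |σ| = ∑_{τ ≥ σ} n (n - 1) ⋯ (n - |τ| + 1)`, an identity of polynomials in `n`.
For any finite join-semilattice, `f (x) = ∑_{y ≥ x} g (y)` factors the matrix `f (a ⊔ b)` as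
`ζ · diag g · ζᵀ`, where the zeta matrix `ζ` is unitriangular once the rows are ordered by a
linear extension; so its determinant is `∏ g` (Lindström).
-/

open Finset Polynomial

namespace Matrix

variable (R P : Type*)

def zeta [Zero R] [One R] [LE P] [DecidableLE P] : Matrix P P R :=
  of fun i j => if i ≤ j then 1 else 0

variable {R P}

theorem det_zeta [CommRing R] [PartialOrder P] [Fintype P] [DecidableEq P] [DecidableLE P] :
    (zeta R P).det = 1 := by
  let e : P ≃ LinearExtension P := Equiv.refl P
  let : Fintype (LinearExtension P) := ‹Fintype P›
  let : DecidableEq (LinearExtension P) := ‹DecidableEq P›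
  rw [← det_reindex_self e, det_of_isUpperTriangular]
  · exact Finset.prod_eq_one fun i _ => if_pos le_rfl
  · intro i j hji
    exact if_neg fun hij => ((toLinearExtension (α := P)).monotone hij).not_gt hji

theorem det_of_sup_eq_prod [CommRing R] [SemilatticeSup P] [Fintype P] [DecidableEq P]
    [DecidableLE P] (f g : P → R) (hfg : ∀ x, f x = ∑ y with x ≤ y, g y) :
    (of fun a b => f (a ⊔ b)).det = ∏ a, g a := by
  have hfactor : of (fun a b => f (a ⊔ b)) = zeta R P * diagonal g * (zeta R P)ᵀ := by
    ext a b
    rw [mul_apply]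
    simp only [of_apply, mul_diagonal, transpose_apply, zeta, hfg, Finset.sum_filter]
    refine Finset.sum_congr rfl fun c _ => ?_
    by_cases hac : a ≤ c <;> by_cases hbc : b ≤ c <;> simp [hac, hbc]
  rw [hfactor, det_mul, det_mul, det_transpose, det_zeta, det_diagonal, one_mul, mul_one]

end Matrix

theorem descPochhammer_eq_prod_range (R : Type*) [CommRing R] (n : ℕ) :
    descPochhammer R n = ∏ j ∈ range n, (X - C (j : R)) := by
  induction n with
  | zero => simp
  | succ n ih => rw [descPochhammer_succ_right, ih, prod_range_succ, ← map_natCast C]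

namespace Setoid

variable {α β : Type*}

theorem bijective_sigma_embedding_lift (σ : Setoid α) :
    Function.Bijective fun x : Σ τ : {τ : Setoid α // σ ≤ τ}, (Quotient τ.1 ↪ β) =>
      (Quotient.lift (fun a => x.2 ⟦a⟧) fun _ _ h => congrArg x.2 (Quotient.sound (x.1.2 h)) :
        Quotient σ → β) := by
  constructor
  · rintro ⟨⟨τ, hτ⟩, e⟩ ⟨⟨τ', hτ'⟩, e'⟩ he
    have hpt (a : α) : e ⟦a⟧ = e' ⟦a⟧ := congrFun he ⟦a⟧
    obtain rfl : τ = τ' := by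
      ext a b
      rw [← Quotient.eq (r := τ), ← Quotient.eq (r := τ'), ← e.injective.eq_iff,
        ← e'.injective.eq_iff, hpt, hpt]
    obtain rfl : e = e' := DFunLike.ext _ _ fun q => Quotient.inductionOn q hpt
    rfl
  · intro f
    refine ⟨⟨⟨ker (f ∘ Quotient.mk σ), fun a b h => congrArg f (Quotient.sound h)⟩,
      ⟨kerLift _, kerLift_injective _⟩⟩, ?_⟩
    ext q
    induction q using Quotient.inductionOn
    rfl

theorem pow_card_quotient_eq_sum_descFactorial [Finite α] [Fintype (Setoid α)]
    [DecidableLE (Setoid α)] (σ : Setoid α) (n : ℕ) :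
    n ^ Nat.card (Quotient σ) = ∑ τ with σ ≤ τ, n.descFactorial (Nat.card (Quotient τ)) := by
  have hcard := Nat.card_eq_of_bijective _ (bijective_sigma_embedding_lift (β := Fin n) σ)
  rw [Nat.card_fun, Nat.card_sigma, Nat.card_eq_fintype_card (α := Fin n), Fintype.card_fin]
    at hcard
  rw [← hcard, Finset.sum_subtype (p := (σ ≤ ·)) _ fun τ => by simp]
  refine Finset.sum_congr rfl fun τ _ => ?_
  have := Fintype.ofFinite (Quotient τ.1)
  rw [Nat.card_eq_fintype_card, Fintype.card_embedding_eq, Fintype.card_fin,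
    Nat.card_eq_fintype_card]

theorem X_pow_card_quotient_eq_sum_descPochhammer {R : Type*} [CommRing R] [IsDomain R]
    [CharZero R] [Finite α] [Fintype (Setoid α)] [DecidableLE (Setoid α)] (σ : Setoid α) :
    (X : R[X]) ^ Nat.card (Quotient σ) =
      ∑ τ with σ ≤ τ, descPochhammer R (Nat.card (Quotient τ)) := by
  refine eq_of_infinite_eval_eq _ _ <|
    Set.infinite_of_injective_forall_mem Nat.cast_injective fun n : ℕ => ?_
  simp only [Set.mem_ofPred_eq, eval_pow, eval_X, eval_finsetSum,
    descPochhammer_eval_eq_descFactorial]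
  exact_mod_cast pow_card_quotient_eq_sum_descFactorial σ n

end Setoid

/-- Jackson–Lindström: `det(n^{|π∨σ|}) = ∏_{π ∈ P(k)} n(n-1)⋯(n-|π|+1)`,
as an identity of polynomials in `n`. -/
theorem gram_det_eq_prod_descFactorial (k : ℕ) :
    Matrix.det (Matrix.of fun π σ : Setoid (Fin k) =>
        (X : ℤ[X]) ^ nblocks (π ⊔ σ)) =
      ∏ π : Setoid (Fin k), ∏ s ∈ Finset.range (nblocks π), ((X : ℤ[X]) - C (s : ℤ)) := by
  classical
  simp_rw [← descPochhammer_eq_prod_range]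
  exact Matrix.det_of_sup_eq_prod _ _ Setoid.X_pow_card_quotient_eq_sum_descPochhammer
end

section
/- The sum over all noncrossing partitions π of {1,...,k} of the number of blocks |π| equals (1/2)·binom(2k,k). -/
/-!
Split a noncrossing partition of `{0, …, n}` according to the block of `0`. Either `{0}` is a
singleton block and the rest is any noncrossing partition of `{1, …, n}`, or the next point
`a + 1` of that block cuts the partition into a noncrossing partition of `{1, …, a}` and one of
`{a + 1, …, n}` whose first block also contains `0`. Hence the number `C n` of noncrossing
partitions satisfies the Catalan recurrence, and their total block count `T n` satisfies
`T (n + 1) = C n + 2 ∑_{i + j = n} T i * C j`. Since `binom(2n+2, n+1) + 2 C n = 4 binom(2n, n)`,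
`2 ∑_{i + j = n} binom(2i, i) * C j = binom(2n+2, n+1)`, and induction gives
`2 T n = binom(2n, n)` for `n ≥ 1`.
-/

open Finset Polynomial

/-- `π` is a pair partition (perfect matching): every point has a unique partner. -/
def IsPairing {m : ℕ} (π : Setoid (Fin m)) : Prop :=
  ∀ i, ∃ j, j ≠ i ∧ π.r i j ∧ ∀ l, π.r i l → l = i ∨ l = j

/-- `π` is noncrossing: there are no `a < b < c < d` with `a ∼ c`, `b ∼ d`
lying in different blocks. -/
def IsNoncrossing {m : ℕ} (π : Setoid (Fin m)) : Prop :=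
  ¬ ∃ a b c d : Fin m, a < b ∧ b < c ∧ c < d ∧ π.r a c ∧ π.r b d ∧ ¬ π.r a b

namespace Setoid

variable {α β γ : Type*}

def comapSum (p : α → β ⊕ γ) (π₁ : Setoid β) (π₂ : Setoid γ) : Setoid α :=
  ker (Sum.map (Quotient.mk π₁) (Quotient.mk π₂) ∘ p)

variable {p : α → β ⊕ γ} {π₁ : Setoid β} {π₂ : Setoid γ}

lemma comapSum_apply {x y : α} :
    comapSum p π₁ π₂ x y ↔ Sum.LiftRel π₁ π₂ (p x) (p y) := by
  change Sum.map (Quotient.mk π₁) (Quotient.mk π₂) (p x) = Sum.map _ _ (p y) ↔ _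
  rcases p x with u | u <;> rcases p y with v | v <;> simp [Quotient.eq]

lemma card_quotient_comapSum [Finite β] [Finite γ] (hp : Function.Surjective p) :
    Nat.card (Quotient (comapSum p π₁ π₂)) =
      Nat.card (Quotient π₁) + Nat.card (Quotient π₂) := by
  have hsurj : Function.Surjective (Sum.map (Quotient.mk π₁) (Quotient.mk π₂) ∘ p) :=
    (Sum.map_surjective.mpr ⟨Quotient.mk_surjective, Quotient.mk_surjective⟩).comp hp
  rw [comapSum, Nat.card_congr (quotientKerEquivOfSurjective _ hsurj), Nat.card_sum]

lemma comap_comapSum_inl {e : β → α} (he : ∀ u, p (e u) = .inl u) :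
    comap e (comapSum p π₁ π₂) = π₁ :=
  ext fun u v => by simp [comap_rel, comapSum_apply, he]

lemma comap_comapSum_inr {e : γ → α} (he : ∀ u, p (e u) = .inr u) :
    comap e (comapSum p π₁ π₂) = π₂ :=
  ext fun u v => by simp [comap_rel, comapSum_apply, he]

lemma eq_comapSum_comap (ρ : Setoid α) {e₁ : β → α} {e₂ : γ → α}
    (hp : ∀ x, ρ x (Sum.elim e₁ e₂ (p x))) (hsep : ∀ u v, ¬ ρ (e₁ u) (e₂ v)) :
    ρ = comapSum p (comap e₁ ρ) (comap e₂ ρ) := by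
  ext x y
  have hxy : ρ x y ↔ ρ (Sum.elim e₁ e₂ (p x)) (Sum.elim e₁ e₂ (p y)) :=
    ⟨fun h => ρ.trans' (ρ.symm' (hp x)) (ρ.trans' h (hp y)),
      fun h => ρ.trans' (hp x) (ρ.trans' h (ρ.symm' (hp y)))⟩
  rw [hxy, comapSum_apply]
  rcases p x with u | u <;> rcases p y with v | v
  · simp [comap_rel]
  · simpa using hsep u v
  · simpa [ρ.comm'] using hsep v u
  · simp [comap_rel]

end Setoid

open Setoid

lemma IsNoncrossing.comap {a m : ℕ} {π : Setoid (Fin m)} (hπ : IsNoncrossing π)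
    {e : Fin a → Fin m} (he : StrictMono e) : IsNoncrossing (π.comap e) := by
  rintro ⟨x, y, z, w, hxy, hyz, hzw, hxz, hyw, hnxy⟩
  exact hπ ⟨e x, e y, e z, e w, he hxy, he hyz, he hzw, hxz, hyw, hnxy⟩

section ConsSingleton

def singletonSplit (n : ℕ) : Fin (n + 1) → Fin n ⊕ Unit :=
  Fin.cons (.inr ()) .inl

variable {n : ℕ}

def consSingleton (π : Setoid (Fin n)) : Setoid (Fin (n + 1)) :=
  comapSum (singletonSplit n) π ⊥

lemma nblocks_consSingleton (π : Setoid (Fin n)) :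
    nblocks (consSingleton π) = nblocks π + 1 := by
  have hsurj : Function.Surjective (singletonSplit n) := by
    rintro (i | ⟨⟩)
    exacts [⟨i.succ, Fin.cons_succ _ _ _⟩, ⟨0, Fin.cons_zero _ _⟩]
  rw [nblocks, consSingleton, card_quotient_comapSum hsurj, nblocks,
    Nat.card_unique (α := Quotient (⊥ : Setoid Unit))]

lemma comap_succ_consSingleton (π : Setoid (Fin n)) : (consSingleton π).comap Fin.succ = π :=
  comap_comapSum_inl fun _ => Fin.cons_succ _ _ _

lemma consSingleton_not_rel_zero_succ (π : Setoid (Fin n)) (i : Fin n) :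
    ¬ consSingleton π 0 i.succ := by
  rw [consSingleton, comapSum_apply]
  simp [singletonSplit]

lemma IsNoncrossing.consSingleton {π : Setoid (Fin n)} (hπ : IsNoncrossing π) :
    IsNoncrossing (consSingleton π) := by
  rintro ⟨x, y, z, w, hxy, hyz, hzw, hxz, hyw, hnxy⟩
  have hx : x ≠ 0 := by
    rintro rfl
    obtain ⟨z, rfl⟩ := Fin.exists_succ_eq.mpr (hxy.trans hyz).ne'
    exact consSingleton_not_rel_zero_succ π z hxz
  obtain ⟨x, rfl⟩ := Fin.exists_succ_eq.mpr hx
  obtain ⟨y, rfl⟩ := Fin.exists_succ_eq.mpr (Fin.succ_pos x |>.trans hxy).ne'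
  obtain ⟨z, rfl⟩ := Fin.exists_succ_eq.mpr (Fin.succ_pos y |>.trans hyz).ne'
  obtain ⟨w, rfl⟩ := Fin.exists_succ_eq.mpr (Fin.succ_pos z |>.trans hzw).ne'
  rw [← comap_succ_consSingleton π] at hπ
  exact hπ ⟨x, y, z, w, Fin.succ_lt_succ_iff.mp hxy, Fin.succ_lt_succ_iff.mp hyz,
    Fin.succ_lt_succ_iff.mp hzw, hxz, hyw, hnxy⟩

end ConsSingleton

section ArcNest

variable {n a : ℕ}

def arcOuter (i : Fin (n - a)) : Fin (n + 1) := ⟨i + (a + 1), by omega⟩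

variable (ha : a < n)

def arcInner (i : Fin a) : Fin (n + 1) := ⟨i + 1, by omega⟩

/-- The truncated subtraction `0 - (a + 1) = 0` sends `0` to the same place as `a + 1`, so `0`
joins the block of `a + 1`. -/
def arcSplit (x : Fin (n + 1)) : Fin a ⊕ Fin (n - a) :=
  if h : 1 ≤ x.val ∧ x.val ≤ a then .inl ⟨x - 1, by omega⟩
  else .inr ⟨x - (a + 1), by omega⟩

def arcNest (π₁ : Setoid (Fin a)) (π₂ : Setoid (Fin (n - a))) : Setoid (Fin (n + 1)) :=
  comapSum (arcSplit ha) π₁ π₂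

variable {ha}

lemma arcSplit_of_le {x : Fin (n + 1)} (h₁ : 1 ≤ x.val) (h₂ : x.val ≤ a) :
    arcSplit ha x = .inl ⟨x - 1, by omega⟩ :=
  dif_pos ⟨h₁, h₂⟩

lemma arcSplit_of_not_le {x : Fin (n + 1)} (h : ¬ (1 ≤ x.val ∧ x.val ≤ a)) :
    arcSplit ha x = .inr ⟨x - (a + 1), by omega⟩ :=
  dif_neg h

lemma arcSplit_arcInner (i : Fin a) : arcSplit ha (arcInner ha i) = .inl i := by
  rw [arcSplit_of_le] <;> simp [arcInner]

lemma arcSplit_arcOuter (i : Fin (n - a)) : arcSplit ha (arcOuter i) = .inr i := by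
  rw [arcSplit_of_not_le (by simp only [arcOuter]; omega)]
  simp [arcOuter]

lemma arcSplit_surjective : Function.Surjective (arcSplit ha) := by
  rintro (i | i)
  exacts [⟨_, arcSplit_arcInner i⟩, ⟨_, arcSplit_arcOuter i⟩]

lemma strictMono_arcInner : StrictMono (arcInner ha) := fun i j h =>
  Fin.mk_lt_mk.mpr (by have := Fin.lt_def.mp h; omega)

lemma strictMono_arcOuter : StrictMono (arcOuter (n := n) (a := a)) := fun i j h =>
  Fin.mk_lt_mk.mpr (by have := Fin.lt_def.mp h; omega)

lemma elim_arcSplit_of_ne_zero {x : Fin (n + 1)} (hx : x ≠ 0) :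
    Sum.elim (arcInner ha) arcOuter (arcSplit ha x) = x := by
  have hx : x.val ≠ 0 := Fin.val_ne_zero_iff.mpr hx
  by_cases h : 1 ≤ x.val ∧ x.val ≤ a
  · rw [arcSplit_of_le h.1 h.2]; ext; simp only [Sum.elim_inl, arcInner]; omega
  · rw [arcSplit_of_not_le h]; ext; simp only [Sum.elim_inr, arcOuter]; omega

lemma elim_arcSplit_zero :
    Sum.elim (arcInner ha) arcOuter (arcSplit ha 0) = ⟨a + 1, by omega⟩ := by
  rw [arcSplit_of_not_le (by simp)]; ext; simp [arcOuter]

variable {π₁ : Setoid (Fin a)} {π₂ : Setoid (Fin (n - a))}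

lemma nblocks_arcNest : nblocks (arcNest ha π₁ π₂) = nblocks π₁ + nblocks π₂ :=
  card_quotient_comapSum arcSplit_surjective

lemma comap_arcInner_arcNest : (arcNest ha π₁ π₂).comap (arcInner ha) = π₁ :=
  comap_comapSum_inl arcSplit_arcInner

lemma comap_arcOuter_arcNest : (arcNest ha π₁ π₂).comap arcOuter = π₂ :=
  comap_comapSum_inr arcSplit_arcOuter

lemma arcNest_rel_zero_succ : arcNest ha π₁ π₂ 0 ⟨a + 1, by omega⟩ := by
  rw [arcNest, comapSum_apply, arcSplit_of_not_le (by simp), arcSplit_of_not_le (by simp)]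
  exact Sum.LiftRel.inr (by simp)

lemma arcNest_not_rel_zero {x : Fin (n + 1)} (h₁ : 1 ≤ x.val) (h₂ : x.val ≤ a) :
    ¬ arcNest ha π₁ π₂ 0 x := by
  rw [arcNest, comapSum_apply, arcSplit_of_not_le (by simp), arcSplit_of_le h₁ h₂]
  exact Sum.not_liftRel_inr_inl

lemma IsNoncrossing.arcNest (h₁ : IsNoncrossing π₁) (h₂ : IsNoncrossing π₂) :
    IsNoncrossing (arcNest ha π₁ π₂) := by
  rintro ⟨x, y, z, w, hxy, hyz, hzw, hxz, hyw, hnxy⟩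
  rw [Fin.lt_def] at hxy hyz hzw
  rw [_root_.arcNest, comapSum_apply] at hxz hyw hnxy
  by_cases hx : 1 ≤ x.val ∧ x.val ≤ a
  · have hz : 1 ≤ z.val ∧ z.val ≤ a := by
      by_contra hz
      rw [arcSplit_of_le hx.1 hx.2, arcSplit_of_not_le hz] at hxz
      exact Sum.not_liftRel_inl_inr hxz
    have hw : w.val ≤ a := by
      by_contra hw
      rw [arcSplit_of_le (by omega) (by omega), arcSplit_of_not_le (by omega)] at hyw
      exact Sum.not_liftRel_inl_inr hyw
    rw [arcSplit_of_le hx.1 hx.2, arcSplit_of_le hz.1 hz.2] at hxz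
    rw [arcSplit_of_le (by omega) (by omega), arcSplit_of_le (by omega) hw] at hyw
    rw [arcSplit_of_le hx.1 hx.2, arcSplit_of_le (by omega) (by omega)] at hnxy
    refine h₁ ⟨_, _, _, _, ?_, ?_, ?_, Sum.liftRel_inl_inl.mp hxz, Sum.liftRel_inl_inl.mp hyw,
      fun h => hnxy (.inl h)⟩ <;> simp only [Fin.mk_lt_mk] <;> omega
  · have hz : a < z.val := by
      by_contra hz
      rw [arcSplit_of_not_le hx, arcSplit_of_le (by omega) (by omega)] at hxz
      exact Sum.not_liftRel_inr_inl hxz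
    have hy : a < y.val := by
      by_contra hy
      rw [arcSplit_of_le (by omega) (by omega), arcSplit_of_not_le (by omega)] at hyw
      exact Sum.not_liftRel_inl_inr hyw
    rw [arcSplit_of_not_le hx, arcSplit_of_not_le (by omega)] at hxz hnxy
    rw [arcSplit_of_not_le (by omega), arcSplit_of_not_le (by omega)] at hyw
    have hxy' : x.val - (a + 1) < y.val - (a + 1) := by
      by_contra hle
      exact hnxy (.inr (by convert π₂.refl' _ using 2; omega))
    refine h₂ ⟨_, _, _, _, ?_, ?_, ?_, Sum.liftRel_inr_inr.mp hxz, Sum.liftRel_inr_inr.mp hyw,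
      fun h => hnxy (.inr h)⟩ <;> simp only [Fin.mk_lt_mk] <;> omega

end ArcNest

lemma IsNoncrossing.not_rel_across_arc {n : ℕ} {ρ : Setoid (Fin (n + 1))}
    (hρ : IsNoncrossing ρ) {j : Fin (n + 1)} (hj : ρ 0 j)
    (hmin : ∀ x, 0 < x → x < j → ¬ ρ 0 x)
    {x y : Fin (n + 1)} (hx : 0 < x) (hxj : x < j) (hjy : j ≤ y) : ¬ ρ x y := by
  intro hxy
  rcases hjy.eq_or_lt with rfl | hjy
  · exact hmin x hx hxj (ρ.trans' hj (ρ.symm' hxy))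
  · exact hρ ⟨0, x, j, y, hx, hxj, hjy, hj, hxy, hmin x hx hxj⟩

abbrev NCPartition (n : ℕ) := {π : Setoid (Fin n) // IsNoncrossing π}

def ncGlue {n : ℕ} : NCPartition n ⊕ (Σ a : Fin n, NCPartition a × NCPartition (n - a)) →
    NCPartition (n + 1)
  | .inl π => ⟨consSingleton π.1, π.2.consSingleton⟩
  | .inr ⟨a, π₁, π₂⟩ => ⟨arcNest a.isLt π₁.1 π₂.1, π₁.2.arcNest π₂.2⟩

lemma ncGlue_injective {n : ℕ} : Function.Injective (ncGlue (n := n)) := by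
  rintro (π | ⟨a, π₁, π₂⟩) (σ | ⟨b, σ₁, σ₂⟩) h <;>
    simp only [ncGlue, Subtype.mk.injEq] at h
  · exact congrArg Sum.inl (Subtype.ext (by
      rw [← comap_succ_consSingleton π.1, h, comap_succ_consSingleton]))
  · exact absurd (h ▸ arcNest_rel_zero_succ) (consSingleton_not_rel_zero_succ π.1 b)
  · exact absurd (h ▸ arcNest_rel_zero_succ) (consSingleton_not_rel_zero_succ σ.1 a)
  · obtain rfl : a = b := by
      by_contra hne
      rcases lt_or_gt_of_ne hne with hab | hab
      · exact arcNest_not_rel_zero (by simp) (by simpa using hab) (h ▸ arcNest_rel_zero_succ)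
      · exact arcNest_not_rel_zero (by simp) (by simpa using hab)
          (h.symm ▸ arcNest_rel_zero_succ)
    have h₁ : π₁ = σ₁ := Subtype.ext (by
      rw [← comap_arcInner_arcNest (ha := a.isLt) (π₁ := π₁.1), h, comap_arcInner_arcNest])
    have h₂ : π₂ = σ₂ := Subtype.ext (by
      rw [← comap_arcOuter_arcNest (ha := a.isLt) (π₂ := π₂.1), h, comap_arcOuter_arcNest])
    rw [h₁, h₂]

lemma ncGlue_surjective {n : ℕ} : Function.Surjective (ncGlue (n := n)) := by
  rintro ⟨ρ, hρ⟩
  by_cases hsing : ∀ x, 0 < x → ¬ ρ 0 x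
  · refine ⟨.inl ⟨ρ.comap Fin.succ, hρ.comap Fin.strictMono_succ⟩, Subtype.ext ?_⟩
    have hp : ∀ x, ρ x (Sum.elim Fin.succ (fun _ => 0) (singletonSplit n x)) :=
      Fin.cases (by simp [singletonSplit]) (fun i => by simp [singletonSplit])
    have hsep : ∀ (i : Fin n) (_ : Unit), ¬ ρ i.succ 0 :=
      fun i _ h => hsing _ i.succ_pos (ρ.symm' h)
    change comapSum _ _ _ = ρ
    conv_rhs => rw [eq_comapSum_comap ρ hp hsep]
    congr 1
    ext ⟨⟩ ⟨⟩
    simp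
  · push Not at hsing
    obtain ⟨j, ⟨hj0, hj⟩, hmin⟩ := wellFounded_lt.has_min {x | 0 < x ∧ ρ 0 x} hsing
    have hj1 : 0 < j.val := hj0
    have ha : j.val - 1 < n := by omega
    refine ⟨.inr ⟨⟨j - 1, ha⟩, ⟨ρ.comap (arcInner ha), hρ.comap strictMono_arcInner⟩,
      ⟨ρ.comap arcOuter, hρ.comap strictMono_arcOuter⟩⟩, Subtype.ext (Eq.symm ?_)⟩
    refine eq_comapSum_comap ρ (fun x => ?_) (fun u v => ?_)
    · rcases eq_or_ne x 0 with rfl | hx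
      · rwa [elim_arcSplit_zero,
          show (⟨j - 1 + 1, _⟩ : Fin (n + 1)) = j from Fin.ext (Nat.sub_add_cancel hj1)]
      · rw [elim_arcSplit_of_ne_zero hx]
    · refine hρ.not_rel_across_arc hj (fun x hx hxj h => hmin x ⟨hx, h⟩ hxj) ?_ ?_ ?_
      all_goals simp only [Fin.lt_def, Fin.le_def, arcInner, arcOuter, Fin.val_zero]; omega

lemma sum_ncPartition_succ {M : Type*} [AddCommMonoid M] (f : ℕ → M) (n : ℕ) :
    ∑ ρ : NCPartition (n + 1), f (nblocks ρ.1) =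
      ∑ π : NCPartition n, f (nblocks π.1 + 1) +
        ∑ a : Fin n, ∑ π₁ : NCPartition a, ∑ π₂ : NCPartition (n - a),
          f (nblocks π₁.1 + nblocks π₂.1) := by
  rw [← (Function.Bijective.sum_comp ⟨ncGlue_injective, ncGlue_surjective⟩),
    Fintype.sum_sum_type, Fintype.sum_sigma]
  simp only [ncGlue, nblocks_consSingleton, nblocks_arcNest, Fintype.sum_prod_type]

lemma card_ncPartition (n : ℕ) : Fintype.card (NCPartition n) = catalan n := by
  induction n using Nat.strong_induction_on with
  | _ n ih =>
  rcases n with _ | n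
  · rw [catalan_zero, Fintype.card_eq_one_iff]
    exact ⟨⟨⊥, fun ⟨x, _⟩ => x.elim0⟩,
      fun π => Subtype.ext (Setoid.ext fun x => x.elim0)⟩
  · have h := sum_ncPartition_succ (fun _ => 1) n
    simp only [Finset.sum_const, Finset.card_univ, smul_eq_mul, mul_one] at h
    rw [h, catalan_succ, Fin.sum_univ_castSucc, ih n n.lt_succ_self, add_comm]
    simp only [Fin.val_castSucc, Fin.val_last, Nat.sub_self, catalan_zero, mul_one]
    congr 1
    exact Finset.sum_congr rfl fun a _ => by rw [ih a (by omega), ih (n - a) (by omega)]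

noncomputable def ncBlockTotal (n : ℕ) : ℕ := ∑ π : NCPartition n, nblocks π.1

lemma ncBlockTotal_zero : ncBlockTotal 0 = 0 :=
  Finset.sum_eq_zero fun π _ => by simp [nblocks]

lemma sum_sum_nblocks_add (a b : ℕ) :
    ∑ π₁ : NCPartition a, ∑ π₂ : NCPartition b, (nblocks π₁.1 + nblocks π₂.1) =
      ncBlockTotal a * catalan b + catalan a * ncBlockTotal b := by
  simp [Finset.sum_add_distrib, ncBlockTotal, card_ncPartition, Finset.mul_sum, mul_comm]

open Finset.Nat in
lemma ncBlockTotal_succ (n : ℕ) :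
    ncBlockTotal (n + 1) =
      catalan n + 2 * ∑ p ∈ antidiagonal n, ncBlockTotal p.1 * catalan p.2 :=
  calc ncBlockTotal (n + 1)
      = ncBlockTotal n + catalan n + ∑ k ∈ range n,
          (ncBlockTotal k * catalan (n - k) + catalan k * ncBlockTotal (n - k)) := by
        rw [ncBlockTotal, sum_ncPartition_succ (fun k => k) n]
        simp only [sum_sum_nblocks_add]
        rw [Fin.sum_univ_eq_sum_range (fun k => ncBlockTotal k * catalan (n - k) +
          catalan k * ncBlockTotal (n - k)), Finset.sum_add_distrib]
        simp [ncBlockTotal, card_ncPartition]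
    _ = catalan n + ∑ p ∈ antidiagonal n,
          (ncBlockTotal p.1 * catalan p.2 + catalan p.1 * ncBlockTotal p.2) := by
        rw [sum_antidiagonal_eq_sum_range_succ_mk, Finset.sum_range_succ]
        simp only [tsub_self, catalan_zero, mul_one, ncBlockTotal_zero, mul_zero, add_zero]
        ring
    _ = catalan n + 2 * ∑ p ∈ antidiagonal n, ncBlockTotal p.1 * catalan p.2 := by
        rw [Finset.sum_add_distrib, two_mul,
          ← sum_antidiagonal_swap (f := fun p => catalan p.1 * ncBlockTotal p.2)]
        simp [mul_comm]

lemma centralBinom_succ_add_two_mul_catalan (n : ℕ) :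
    Nat.centralBinom (n + 1) + 2 * catalan n = 4 * Nat.centralBinom n := by
  apply Nat.eq_of_mul_eq_mul_left n.succ_pos
  calc (n + 1) * (Nat.centralBinom (n + 1) + 2 * catalan n)
      = (n + 1) * Nat.centralBinom (n + 1) + 2 * ((n + 1) * catalan n) := by ring
    _ = 2 * (2 * n + 1) * Nat.centralBinom n + 2 * Nat.centralBinom n := by
        rw [Nat.succ_mul_centralBinom_succ, succ_mul_catalan_eq_centralBinom]
    _ = (n + 1) * (4 * Nat.centralBinom n) := by ring

open Finset.Nat in
lemma two_mul_sum_antidiagonal_centralBinom_mul_catalan (n : ℕ) :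
    2 * ∑ p ∈ antidiagonal n, Nat.centralBinom p.1 * catalan p.2 =
      Nat.centralBinom (n + 1) := by
  induction n with
  | zero => simp [Nat.centralBinom_eq_two_mul_choose]
  | succ n ih =>
    have hshift : ∑ p ∈ antidiagonal n, Nat.centralBinom (p.1 + 1) * catalan p.2 +
        2 * catalan (n + 1) = 4 * ∑ p ∈ antidiagonal n, Nat.centralBinom p.1 * catalan p.2 := by
      rw [catalan_succ', Finset.mul_sum, Finset.mul_sum, ← Finset.sum_add_distrib]
      refine Finset.sum_congr rfl fun p _ => ?_
      rw [← mul_assoc, ← add_mul, centralBinom_succ_add_two_mul_catalan, mul_assoc]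
    rw [sum_antidiagonal_succ, Nat.centralBinom_zero, one_mul]
    have := centralBinom_succ_add_two_mul_catalan (n + 1)
    dsimp only
    omega

open Finset.Nat in
lemma two_mul_ncBlockTotal_succ (n : ℕ) :
    2 * ncBlockTotal (n + 1) = Nat.centralBinom (n + 1) := by
  induction n using Nat.strong_induction_on with
  | _ n ih =>
  rcases n with _ | m
  · simp [ncBlockTotal_succ, ncBlockTotal_zero, Nat.centralBinom_eq_two_mul_choose]
  · calc 2 * ncBlockTotal (m + 2)
        = 2 * (catalan (m + 1) +
            ∑ p ∈ antidiagonal m, 2 * ncBlockTotal (p.1 + 1) * catalan p.2) := by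
          rw [ncBlockTotal_succ, sum_antidiagonal_succ, ncBlockTotal_zero, zero_mul, zero_add,
            Finset.mul_sum]
          simp only [mul_assoc]
      _ = 2 * (catalan (m + 1) +
            ∑ p ∈ antidiagonal m, Nat.centralBinom (p.1 + 1) * catalan p.2) := by
          congr 2
          refine Finset.sum_congr rfl fun p hp => ?_
          rw [ih p.1 (Finset.Nat.antidiagonal.fst_lt hp)]
      _ = 2 * ∑ p ∈ antidiagonal (m + 1), Nat.centralBinom p.1 * catalan p.2 := by
          rw [sum_antidiagonal_succ, Nat.centralBinom_zero, one_mul]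
      _ = Nat.centralBinom (m + 2) := two_mul_sum_antidiagonal_centralBinom_mul_catalan (m + 1)

/-- The total number of blocks over all noncrossing partitions of `{1,…,k}` is
`(1/2)·binom(2k,k)`. -/
theorem nc_total_blocks_eq_half_centralBinom (k : ℕ) (hk : 1 ≤ k) :
    2 * ∑ π : {π : Setoid (Fin k) // IsNoncrossing π}, nblocks π.1 =
      Nat.centralBinom k := by
  obtain ⟨n, rfl⟩ := Nat.exists_eq_add_of_le' hk
  exact two_mul_ncBlockTotal_succ n
end

section
/- For noncrossing pair partitions of {1,...,2k}, Σ_{π ∈ NC_2(2k)} #{ pairs i∼_π j with h_π(i) = r } = binom(2k, k−r) − binom(2k, k−r−1) for 1 ≤ r ≤ k, where for a pair i∼_π j with i < j, h_π(i) denotes the height statistic at i. -/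
open Finset Polynomial

noncomputable def height {m : ℕ} (π : Setoid (Fin m)) (i : ℕ) : ℕ :=
  Nat.card {j : Fin m // (j : ℕ) < i ∧ ∃ p : Fin m, π.r j p ∧ i ≤ (p : ℕ)}

namespace NCProof

variable {n : ℕ}

/-- Height of the ±1 path given by word `f` after `i` steps. -/
def Hgt (f : Fin n → Bool) (i : ℕ) : ℤ :=
  ∑ j ∈ Finset.univ.filter (fun j : Fin n => (j : ℕ) < i), (if f j then (1:ℤ) else -1)

lemma Hgt_zero (f : Fin n → Bool) : Hgt f 0 = 0 := by
  simp [Hgt]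

lemma Hgt_succ (f : Fin n → Bool) {i : ℕ} (hi : i < n) :
    Hgt f (i+1) = Hgt f i + (if f ⟨i, hi⟩ then (1:ℤ) else -1) := by
  unfold Hgt
  have h : Finset.univ.filter (fun j : Fin n => (j : ℕ) < i + 1)
      = insert ⟨i, hi⟩ (Finset.univ.filter (fun j : Fin n => (j : ℕ) < i)) := by
    ext j
    simp only [mem_filter, mem_univ, true_and, mem_insert]
    constructor
    · intro h
      rcases Nat.lt_succ_iff_lt_or_eq.mp h with h | h
      · exact Or.inr h
      · exact Or.inl (Fin.ext h)
    · rintro (rfl | h)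
      · exact Nat.lt_succ_self _
      · omega
  rw [h, Finset.sum_insert (by simp)]
  by_cases hf : f ⟨i, hi⟩ <;> simp [hf] <;> ring

lemma Hgt_stable (f : Fin n → Bool) {i : ℕ} (hi : n ≤ i) : Hgt f i = Hgt f n := by
  unfold Hgt
  congr 1
  ext j
  simp only [mem_filter, mem_univ, true_and]
  exact ⟨fun _ => j.isLt, fun _ => lt_of_lt_of_le j.isLt hi⟩

lemma Hgt_succ_sub_abs (f : Fin n → Bool) (i : ℕ) :
    Hgt f (i+1) = Hgt f i ∨ Hgt f (i+1) = Hgt f i + 1 ∨ Hgt f (i+1) = Hgt f i - 1 := by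
  by_cases hi : i < n
  · rw [Hgt_succ f hi]
    by_cases h : f ⟨i, hi⟩ <;> simp [h] <;> ring_nf <;> tauto
  · push_neg at hi
    left
    rw [Hgt_stable f (le_trans hi (Nat.le_succ i)), Hgt_stable f hi]

/-- Discrete IVT, increasing direction. -/
lemma IVT_up (f : Fin n → Bool) (c : ℤ) :
    ∀ b a, a ≤ b → Hgt f a ≤ c → c ≤ Hgt f b → ∃ l, a ≤ l ∧ l ≤ b ∧ Hgt f l = c := by
  intro b
  induction b with
  | zero =>
    intro a ha h1 h2
    obtain rfl : a = 0 := Nat.le_zero.mp ha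
    exact ⟨0, le_refl 0, le_refl 0, le_antisymm h1 h2⟩
  | succ b ih =>
    intro a ha h1 h2
    by_cases hc : c ≤ Hgt f b
    · by_cases hab : a ≤ b
      · obtain ⟨l, h⟩ := ih a hab h1 hc
        exact ⟨l, h.1, le_trans h.2.1 (Nat.le_succ b), h.2.2⟩
      · obtain rfl : a = b + 1 := by omega
        exact ⟨b+1, le_refl _, le_refl _, le_antisymm h1 h2⟩
    · push_neg at hc
      have := Hgt_succ_sub_abs f b
      have : Hgt f (b+1) = c := by omega
      exact ⟨b+1, by omega, le_refl _, this⟩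

/-- Discrete IVT, decreasing direction. -/
lemma IVT_down (f : Fin n → Bool) (c : ℤ) :
    ∀ b a, a ≤ b → Hgt f b ≤ c → c ≤ Hgt f a → ∃ l, a ≤ l ∧ l ≤ b ∧ Hgt f l = c := by
  intro b
  induction b with
  | zero =>
    intro a ha h1 h2
    obtain rfl : a = 0 := Nat.le_zero.mp ha
    exact ⟨0, le_refl 0, le_refl 0, le_antisymm h1 h2⟩
  | succ b ih =>
    intro a ha h1 h2
    by_cases hc : Hgt f b ≤ c
    · by_cases hab : a ≤ b
      · obtain ⟨l, h⟩ := ih a hab hc h2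
        exact ⟨l, h.1, le_trans h.2.1 (Nat.le_succ b), h.2.2⟩
      · obtain rfl : a = b + 1 := by omega
        exact ⟨b+1, le_refl _, le_refl _, le_antisymm h1 h2⟩
    · push_neg at hc
      have := Hgt_succ_sub_abs f b
      have : Hgt f (b+1) = c := by omega
      exact ⟨b+1, by omega, le_refl _, this⟩

end NCProof
namespace NCProof

variable {n : ℕ}

/-- number of up-steps -/
def Tcard (f : Fin n → Bool) : ℕ := (Finset.univ.filter (fun j => f j = true)).card

lemma Hgt_split (f : Fin n → Bool) (i : ℕ) :
    Hgt f i = ((Finset.univ.filter (fun j : Fin n => (j:ℕ) < i ∧ f j = true)).card : ℤ)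
      - ((Finset.univ.filter (fun j : Fin n => (j:ℕ) < i ∧ ¬ f j = true)).card : ℤ) := by
  classical
  unfold Hgt
  rw [← Finset.sum_filter_add_sum_filter_not
    (Finset.univ.filter (fun j : Fin n => (j:ℕ) < i)) (fun j => f j = true)]
  rw [Finset.filter_filter, Finset.filter_filter]
  rw [Finset.sum_congr rfl (fun x hx => if_pos (Finset.mem_filter.mp hx).2.2),
      Finset.sum_congr rfl (g := fun _ => (-1:ℤ)) (fun x hx => if_neg (Finset.mem_filter.mp hx).2.2)]
  simp [mul_comm]
  ring

lemma Hgt_n (f : Fin n → Bool) : Hgt f n = 2 * (Tcard f : ℤ) - n := by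
  classical
  rw [Hgt_split]
  have h1 : (Finset.univ.filter (fun j : Fin n => (j:ℕ) < n ∧ f j = true))
      = Finset.univ.filter (fun j => f j = true) := by
    apply Finset.filter_congr; intro x _; simp [x.isLt]
  have h2 : (Finset.univ.filter (fun j : Fin n => (j:ℕ) < n ∧ ¬ f j = true))
      = Finset.univ.filter (fun j => ¬ f j = true) := by
    apply Finset.filter_congr; intro x _; simp [x.isLt]
  rw [h1, h2]
  have := Finset.card_filter_add_card_filter_not (s := (Finset.univ : Finset (Fin n)))
    (fun j : Fin n => f j = true)
  rw [Finset.card_univ, Fintype.card_fin] at this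
  unfold Tcard
  omega

lemma card_Tcard_eq (m : ℕ) :
    (Finset.univ.filter (fun f : Fin n → Bool => Tcard f = m)).card = n.choose m := by
  classical
  rw [show n.choose m = (Finset.powersetCard m (Finset.univ : Finset (Fin n))).card by
    rw [Finset.card_powersetCard, Finset.card_univ, Fintype.card_fin]]
  apply Finset.card_bij (fun f _ => Finset.univ.filter (fun j => f j = true))
  · intro f hf
    rw [Finset.mem_powersetCard]
    exact ⟨Finset.subset_univ _, (Finset.mem_filter.mp hf).2⟩
  · intro f hf g hg hfg
    funext j
    have : (j ∈ Finset.univ.filter (fun j => f j = true)) ↔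
        (j ∈ Finset.univ.filter (fun j => g j = true)) := by rw [hfg]
    simp only [Finset.mem_filter, Finset.mem_univ, true_and] at this
    by_cases h : f j <;> by_cases h' : g j <;> simp_all
  · intro s hs
    rw [Finset.mem_powersetCard] at hs
    refine ⟨fun j => decide (j ∈ s), ?_, ?_⟩
    · rw [Finset.mem_filter]
      refine ⟨Finset.mem_univ _, ?_⟩
      unfold Tcard
      rw [← hs.2]
      congr 1
      ext j; simp
    · ext j; simp

lemma card_endpoint (c : ℤ) (m : ℕ) (hm : c = 2 * (m:ℤ) - n) (hmn : m ≤ n) :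
    (Finset.univ.filter (fun f : Fin n → Bool => Hgt f n = c)).card = n.choose m := by
  classical
  rw [← card_Tcard_eq m]
  congr 1
  apply Finset.filter_congr
  intro f _
  rw [Hgt_n, hm]
  constructor <;> intro h <;> omega

lemma card_endpoint_empty (c : ℤ) (hodd : ∀ m : ℕ, m ≤ n → c ≠ 2 * (m:ℤ) - n) :
    (Finset.univ.filter (fun f : Fin n → Bool => Hgt f n = c)).card = 0 := by
  classical
  rw [Finset.card_eq_zero]
  ext f
  simp only [Finset.mem_filter, Finset.mem_univ, true_and, Finset.notMem_empty, iff_false]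
  intro h
  have hT : Tcard f ≤ n := by
    unfold Tcard
    calc (Finset.univ.filter (fun j : Fin n => f j = true)).card ≤ Finset.univ.card :=
      Finset.card_le_card (Finset.filter_subset _ _)
    _ = n := by rw [Finset.card_univ, Fintype.card_fin]
  exact hodd (Tcard f) hT (by rw [← h, Hgt_n])

end NCProof
namespace NCProof

variable {n : ℕ}

open Classical in
/-- Reflect the path after the first time it hits −1. -/
noncomputable def Refl (g : Fin n → Bool) (hex : ∃ i, Hgt g i = -1) : Fin n → Bool :=
  fun j => if (j : ℕ) < Nat.find hex then g j else !(g j)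

open Classical in
lemma Hgt_Refl_le (g : Fin n → Bool) (hex : ∃ i, Hgt g i = -1) {m : ℕ}
    (hm : m ≤ Nat.find hex) : Hgt (Refl g hex) m = Hgt g m := by
  unfold Hgt Refl
  apply Finset.sum_congr rfl
  intro j hj
  have : (j:ℕ) < Nat.find hex := lt_of_lt_of_le (Finset.mem_filter.mp hj).2 hm
  rw [if_pos this]

open Classical in
lemma Hgt_Refl_ge (g : Fin n → Bool) (hex : ∃ i, Hgt g i = -1) :
    ∀ m, Nat.find hex ≤ m → Hgt (Refl g hex) m = -2 - Hgt g m := by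
  intro m
  induction m with
  | zero =>
    intro hm
    have h0 : Nat.find hex = 0 := Nat.le_zero.mp hm
    have hs := Nat.find_spec hex
    rw [h0, Hgt_zero] at hs
    omega
  | succ m ih =>
    intro hm
    rcases Nat.lt_or_ge m (Nat.find hex) with h | h
    · have heq : Nat.find hex = m + 1 := by omega
      have hs := Nat.find_spec hex
      rw [heq] at hs
      rw [Hgt_Refl_le g hex (le_of_eq heq.symm), hs]
      omega
    · rcases Nat.lt_or_ge m n with hmn | hmn
      · have hstep := Hgt_succ g hmn
        have hstep' := Hgt_succ (Refl g hex) hmn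
        have hrb : Refl g hex ⟨m, hmn⟩ = !(g ⟨m, hmn⟩) := by
          unfold Refl; rw [if_neg (by simpa using h)]
        rw [hrb] at hstep'
        rw [hstep', ih h, hstep]
        by_cases hb : g ⟨m, hmn⟩ <;> simp [hb] <;> ring
      · rw [Hgt_stable (Refl g hex) (show n ≤ m + 1 by omega),
          ← Hgt_stable (Refl g hex) hmn, ih h, Hgt_stable g hmn,
          ← Hgt_stable g (show n ≤ m + 1 by omega)]

open Classical in
lemma Refl_find_le {g g' : Fin n → Bool} (hexg : ∃ i, Hgt g i = -1)
    (hexg' : ∃ i, Hgt g' i = -1) (heq : Refl g hexg = Refl g' hexg') :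
    Nat.find hexg ≤ Nat.find hexg' := by
  by_contra hlt
  push_neg at hlt
  have h2 : Hgt (Refl g' hexg') (Nat.find hexg') = -1 := by
    rw [Hgt_Refl_le g' hexg' (le_refl _)]
    exact Nat.find_spec hexg'
  rw [← heq, Hgt_Refl_le g hexg (le_of_lt hlt)] at h2
  exact Nat.find_min hexg hlt h2

open Classical in
lemma Refl_inj {g g' : Fin n → Bool} (hexg : ∃ i, Hgt g i = -1)
    (hexg' : ∃ i, Hgt g' i = -1) (heq : Refl g hexg = Refl g' hexg') : g = g' := by
  have ht : Nat.find hexg = Nat.find hexg' :=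
    le_antisymm (Refl_find_le hexg hexg' heq) (Refl_find_le hexg' hexg heq.symm)
  funext j
  have hj := congrFun heq j
  unfold Refl at hj
  rw [ht] at hj
  by_cases h : (j:ℕ) < Nat.find hexg'
  · rwa [if_pos h, if_pos h] at hj
  · rw [if_neg h, if_neg h] at hj
    exact Bool.not_inj hj

open Classical in
lemma Refl_invol (g : Fin n → Bool) (hex : ∃ i, Hgt g i = -1)
    (hex' : ∃ i, Hgt (Refl g hex) i = -1) : Refl (Refl g hex) hex' = g := by
  have hfind : Nat.find hex' = Nat.find hex := by
    rw [Nat.find_eq_iff]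
    constructor
    · rw [Hgt_Refl_le g hex (le_refl _)]
      exact Nat.find_spec hex
    · intro m hm
      rw [Hgt_Refl_le g hex (le_of_lt hm)]
      exact Nat.find_min hex hm
  funext j
  show (if (j:ℕ) < Nat.find hex' then Refl g hex j else !(Refl g hex j)) = g j
  rw [hfind]
  unfold Refl
  by_cases h : (j:ℕ) < Nat.find hex
  · rw [if_pos h, if_pos h]
  · rw [if_neg h, if_neg h, Bool.not_not]

/-- Nonnegativity is equivalent to never touching −1. -/
lemma nonneg_iff_not_touch (g : Fin n → Bool) :
    (∀ i, 0 ≤ Hgt g i) ↔ ¬ ∃ i, Hgt g i = -1 := by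
  constructor
  · rintro h ⟨i, hi⟩
    have := h i
    omega
  · intro h i
    induction i with
    | zero => rw [Hgt_zero]
    | succ i ih =>
      push_neg at h
      have h1 := h (i+1)
      have := Hgt_succ_sub_abs g i
      omega

/-- The count of nonnegative paths ending at height `c = 2m − n`. -/
lemma card_nonneg_endpoint (c : ℤ) (hc : 0 ≤ c) (m : ℕ) (hm : c = 2 * (m:ℤ) - n)
    (hmn : m ≤ n) :
    Nat.card {g : Fin n → Bool // (∀ i, 0 ≤ Hgt g i) ∧ Hgt g n = c}
      = n.choose m - n.choose (m+1) := by
  classical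
  rw [Nat.card_eq_fintype_card, Fintype.card_subtype]
  have hsplit := Finset.card_filter_add_card_filter_not
    (s := (Finset.univ : Finset (Fin n → Bool)))
    (fun g => (∀ i, 0 ≤ Hgt g i) ∧ Hgt g n = c)
  have hall : (Finset.univ.filter (fun g : Fin n → Bool =>
      ((∀ i, 0 ≤ Hgt g i) ∧ Hgt g n = c) ∨ ((∃ i, Hgt g i = -1) ∧ Hgt g n = c))).card
      = n.choose m := by
    rw [show (Finset.univ.filter (fun g : Fin n → Bool =>
      ((∀ i, 0 ≤ Hgt g i) ∧ Hgt g n = c) ∨ ((∃ i, Hgt g i = -1) ∧ Hgt g n = c)))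
      = Finset.univ.filter (fun g : Fin n → Bool => Hgt g n = c) from ?_]
    · exact card_endpoint c m hm hmn
    · apply Finset.filter_congr
      intro g _
      constructor
      · rintro (h | h) <;> exact h.2
      · intro h
        by_cases hp : ∀ i, 0 ≤ Hgt g i
        · exact Or.inl ⟨hp, h⟩
        · rw [nonneg_iff_not_touch] at hp
          exact Or.inr ⟨not_not.mp hp, h⟩
  have hdisj : (Finset.univ.filter (fun g : Fin n → Bool =>
      ((∀ i, 0 ≤ Hgt g i) ∧ Hgt g n = c) ∨ ((∃ i, Hgt g i = -1) ∧ Hgt g n = c))).card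
      = (Finset.univ.filter (fun g : Fin n → Bool =>
          (∀ i, 0 ≤ Hgt g i) ∧ Hgt g n = c)).card
        + (Finset.univ.filter (fun g : Fin n → Bool =>
          (∃ i, Hgt g i = -1) ∧ Hgt g n = c)).card := by
    rw [← Finset.card_union_of_disjoint, Finset.filter_or]
    rw [Finset.disjoint_filter]
    rintro g _ ⟨hnn, _⟩ ⟨hex, _⟩
    exact (nonneg_iff_not_touch g).mp hnn hex
  have htouch : (Finset.univ.filter (fun g : Fin n → Bool =>
        (∃ i, Hgt g i = -1) ∧ Hgt g n = c)).card
      = (Finset.univ.filter (fun g : Fin n → Bool => Hgt g n = -2 - c)).card := by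
    apply Finset.card_bij (fun g hg => Refl g (Finset.mem_filter.mp hg).2.1)
    · intro g hg
      simp only [Finset.mem_filter, Finset.mem_univ, true_and] at hg ⊢
      obtain ⟨hex, hend⟩ := hg
      have hfn : Nat.find hex ≤ n := by
        by_contra hcon
        push_neg at hcon
        have := Nat.find_spec hex
        rw [Hgt_stable g (le_of_lt hcon), hend] at this
        omega
      rw [Hgt_Refl_ge g hex n hfn, hend]
    · intro g hg g' hg' heq
      exact Refl_inj _ _ heq
    · intro h hh
      simp only [Finset.mem_filter, Finset.mem_univ, true_and] at hh
      have hex : ∃ i, Hgt h i = -1 := by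
        rcases IVT_down h (-1) n 0 (Nat.zero_le n) (by rw [hh]; omega)
          (by rw [Hgt_zero]; omega) with ⟨l, _, _, hl⟩
        exact ⟨l, hl⟩
      have hfn : Nat.find hex ≤ n := by
        by_contra hcon
        push_neg at hcon
        have := Nat.find_spec hex
        rw [Hgt_stable h (le_of_lt hcon), hh] at this
        omega
      have hex2 : ∃ i, Hgt (Refl h hex) i = -1 := by
        refine ⟨Nat.find hex, ?_⟩
        rw [Hgt_Refl_le h hex (le_refl _)]
        exact Nat.find_spec hex
      refine ⟨Refl h hex, Finset.mem_filter.mpr ⟨Finset.mem_univ _, ⟨hex2, ?_⟩⟩, ?_⟩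
      · rw [Hgt_Refl_ge h hex n hfn, hh]; ring
      · exact Refl_invol h hex hex2
  have hneg : (Finset.univ.filter (fun g : Fin n → Bool => Hgt g n = -2 - c)).card
      = n.choose (m+1) := by
    rcases Nat.lt_or_ge m n with hm1 | hm1
    · rw [show n.choose (m+1) = n.choose (n - (m+1)) from (Nat.choose_symm (by omega)).symm]
      exact card_endpoint (-2-c) (n - (m+1)) (by omega) (by omega)
    · rw [Nat.choose_eq_zero_of_lt (by omega)]
      apply card_endpoint_empty
      intro m' hm' habs
      omega
  omega

end NCProof
namespace NCProof

variable {n : ℕ}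

/-- Reverse-and-flip the path strictly after position `i`. -/
def Tr (f : Fin n → Bool) (i : ℕ) : Fin n → Bool := fun j =>
  if h : (j:ℕ) ≤ i then f j else !f ⟨n + i - j, by omega⟩

lemma Tr_le (f : Fin n → Bool) (i : ℕ) (j : Fin n) (h : (j:ℕ) ≤ i) : Tr f i j = f j := by
  unfold Tr; rw [dif_pos h]

lemma Tr_gt (f : Fin n → Bool) (i : ℕ) (j : Fin n) (h : i < (j:ℕ)) :
    Tr f i j = !f ⟨n + i - j, by omega⟩ := by
  unfold Tr; rw [dif_neg (by omega)]

lemma Hgt_Tr_le (f : Fin n → Bool) (i : ℕ) {m : ℕ} (hm : m ≤ i + 1) :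
    Hgt (Tr f i) m = Hgt f m := by
  unfold Hgt
  apply Finset.sum_congr rfl
  intro j hj
  have := (Finset.mem_filter.mp hj).2
  rw [Tr_le f i j (by omega)]

lemma Hgt_Tr_ge (f : Fin n → Bool) {i : ℕ} (hi : i < n) :
    ∀ m, i + 1 ≤ m → m ≤ n →
      Hgt (Tr f i) m = Hgt f (i+1) - Hgt f n + Hgt f (n + i + 1 - m) := by
  intro m
  induction m with
  | zero => omega
  | succ m ih =>
    intro hm hmn
    rcases Nat.lt_or_ge i m with h | h
    · -- m ≥ i+1, step case
      have hmn' : m < n := by omega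
      have ihm := ih (by omega) (by omega)
      have hstep := Hgt_succ (Tr f i) hmn'
      have hTr : Tr f i ⟨m, hmn'⟩ = !f ⟨n + i - m, by omega⟩ := Tr_gt f i ⟨m, hmn'⟩ h
      have hidx : n + i - m < n := by omega
      have hstep2 := Hgt_succ f hidx
      have e1 : n + i - m + 1 = n + i + 1 - m := by omega
      have e2 : n + i + 1 - (m+1) = n + i - m := by omega
      rw [e1] at hstep2
      rw [hstep, hTr, ihm, e2, hstep2]
      by_cases hb : f ⟨n + i - m, hidx⟩ <;> simp [hb] <;> ring
    · -- m = i, base: m+1 = i+1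
      have : m = i := by omega
      subst this
      rw [Hgt_Tr_le f m (le_refl _), show n + m + 1 - (m+1) = n by omega]
      ring

lemma Tr_Tr (f : Fin n → Bool) {i : ℕ} (hi : i < n) : Tr (Tr f i) i = f := by
  funext j
  by_cases h : (j:ℕ) ≤ i
  · rw [Tr_le _ i j h, Tr_le _ i j h]
  · push_neg at h
    rw [Tr_gt _ i j h]
    have h2 : i < n + i - (j:ℕ) := by omega
    rw [Tr_gt f i ⟨n + i - j, by omega⟩ (by simpa using h2)]
    have : n + i - (n + i - (j:ℕ)) = (j:ℕ) := by omega
    simp only [Bool.not_not]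
    exact congrArg f (Fin.ext this)

end NCProof
namespace NCProof

variable {n : ℕ}

section Marked

variable {c : ℤ}

def AType (n : ℕ) (c : ℤ) :=
  {q : (Fin n → Bool) × Fin n //
      ((∀ m, 0 ≤ Hgt q.1 m) ∧ Hgt q.1 n = 0) ∧ q.1 q.2 = true ∧ Hgt q.1 ((q.2:ℕ)+1) = c}

def BType (n : ℕ) (c : ℤ) :=
  {g : Fin n → Bool // (∀ m, 0 ≤ Hgt g m) ∧ Hgt g n = 2*c}

lemma markMap_mem (q : AType n c) :
    (∀ m, 0 ≤ Hgt (Tr q.1.1 q.1.2) m) ∧ Hgt (Tr q.1.1 q.1.2) n = 2*c := by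
  obtain ⟨⟨f, i⟩, ⟨⟨hpos, hend⟩, hup, hht⟩⟩ := q
  simp only at hup hht ⊢
  have hi : (i:ℕ) < n := i.isLt
  constructor
  · intro m
    rcases Nat.lt_or_ge m ((i:ℕ)+1) with h | h
    · rw [Hgt_Tr_le f i (le_of_lt h)]
      exact hpos m
    · rcases le_or_gt m n with h2 | h2
      · rw [Hgt_Tr_ge f hi m h h2, hht, hend]
        have := hpos (n + (i:ℕ) + 1 - m)
        have : (0:ℤ) ≤ Hgt f (n + (i:ℕ) + 1 - m) := this
        have hcpos : 0 ≤ c := by rw [← hht]; exact hpos _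
        omega
      · rw [Hgt_stable _ (le_of_lt h2), Hgt_Tr_ge f hi n (by omega) (le_refl n), hht, hend,
          show n + (i:ℕ) + 1 - n = (i:ℕ)+1 by omega, hht]
        have hcpos : 0 ≤ c := by rw [← hht]; exact hpos _
        omega
  · rw [Hgt_Tr_ge f hi n (by omega) (le_refl n), hht, hend,
      show n + (i:ℕ) + 1 - n = (i:ℕ)+1 by omega, hht]
    ring

noncomputable def markMap (q : AType n c) : BType n c :=
  ⟨Tr q.1.1 q.1.2, markMap_mem q⟩

/-- index of the last visit to height `c-1`. -/
noncomputable def lastIdx (g : Fin n → Bool) (c : ℤ) : ℕ :=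
  Nat.findGreatest (fun m => Hgt g m = c - 1) n

lemma lastIdx_spec (hc : 1 ≤ c) (g : Fin n → Bool)
    (hpos : ∀ m, 0 ≤ Hgt g m) (hend : Hgt g n = 2*c) :
    Hgt g (lastIdx g c) = c - 1 ∧ lastIdx g c < n ∧
      (∀ l, lastIdx g c < l → l ≤ n → Hgt g l ≠ c - 1) := by
  classical
  obtain ⟨w, hw0, hwn, hw⟩ := IVT_up g (c-1) n 0 (Nat.zero_le n)
    (by rw [Hgt_zero]; omega) (by rw [hend]; omega)
  have hspec : Hgt g (lastIdx g c) = c - 1 := by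
    unfold lastIdx; exact Nat.findGreatest_spec (P := fun m => Hgt g m = c - 1) hwn hw
  have hle : lastIdx g c ≤ n := Nat.findGreatest_le n
  have hlt : lastIdx g c < n := by
    rcases Nat.lt_or_ge (lastIdx g c) n with h | h
    · exact h
    · exfalso
      have : lastIdx g c = n := by omega
      rw [this, hend] at hspec
      omega
  refine ⟨hspec, hlt, ?_⟩
  intro l hl hln
  exact Nat.findGreatest_is_greatest hl hln

lemma lastIdx_up (hc : 1 ≤ c) (g : Fin n → Bool)
    (hpos : ∀ m, 0 ≤ Hgt g m) (hend : Hgt g n = 2*c) :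
    Hgt g (lastIdx g c + 1) = c ∧
      (∀ l, lastIdx g c + 1 ≤ l → l ≤ n → c ≤ Hgt g l) := by
  obtain ⟨hspec, hlt, hmax⟩ := lastIdx_spec hc g hpos hend
  have hsucc : Hgt g (lastIdx g c + 1) = c ∨ Hgt g (lastIdx g c + 1) = c - 2 := by
    have := Hgt_succ g hlt
    by_cases hb : g ⟨lastIdx g c, hlt⟩ <;> simp [hb] at this <;> omega
  have hup : Hgt g (lastIdx g c + 1) = c := by
    rcases hsucc with h | h
    · exact h
    · exfalso
      obtain ⟨l, hl1, hl2, hl3⟩ := IVT_up g (c-1) n (lastIdx g c + 1)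
        (by omega) (by omega) (by rw [hend]; omega)
      exact hmax l (by omega) hl2 hl3
  refine ⟨hup, ?_⟩
  intro l hl hln
  by_contra hcon
  push_neg at hcon
  obtain ⟨l', hl1', hl2', hl3'⟩ := IVT_down g (c-1) l (lastIdx g c + 1) hl
    (by omega) (by omega)
  exact hmax l' (by omega) (by omega) hl3'

lemma markInv_mem (hc : 1 ≤ c) (g : BType n c) :
    ((∀ m, 0 ≤ Hgt (Tr g.1 (lastIdx g.1 c)) m) ∧ Hgt (Tr g.1 (lastIdx g.1 c)) n = 0) ∧
      (Tr g.1 (lastIdx g.1 c)) ⟨lastIdx g.1 c,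
        (lastIdx_spec hc g.1 g.2.1 g.2.2).2.1⟩ = true ∧
      Hgt (Tr g.1 (lastIdx g.1 c)) ((lastIdx g.1 c)+1) = c := by
  obtain ⟨g, hpos, hend⟩ := g
  simp only
  obtain ⟨hspec, hlt, hmax⟩ := lastIdx_spec hc g hpos hend
  obtain ⟨hup, hge⟩ := lastIdx_up hc g hpos hend
  set i := lastIdx g c with hi
  have hendT : Hgt (Tr g i) n = 0 := by
    rw [Hgt_Tr_ge g hlt n (by omega) (le_refl n), hup, hend,
      show n + i + 1 - n = i + 1 by omega, hup]
    ring
  refine ⟨⟨?_, hendT⟩, ?_, ?_⟩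
  · intro m
    rcases Nat.lt_or_ge m (i+1) with h | h
    · rw [Hgt_Tr_le g i (le_of_lt h)]
      exact hpos m
    · rcases le_or_gt m n with h2 | h2
      · rw [Hgt_Tr_ge g hlt m h h2, hup, hend]
        have := hge (n + i + 1 - m) (by omega) (by omega)
        omega
      · rw [Hgt_stable _ (le_of_lt h2), hendT]
  · rw [Tr_le g i _ (le_refl i)]
    have := Hgt_succ g hlt
    by_cases hb : g ⟨i, hlt⟩
    · exact hb
    · exfalso; simp [hb] at this; omega
  · rw [Hgt_Tr_le g i (le_refl _)]
    exact hup

noncomputable def markInv (hc : 1 ≤ c) (g : BType n c) : AType n c :=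
  ⟨(Tr g.1 (lastIdx g.1 c), ⟨lastIdx g.1 c, (lastIdx_spec hc g.1 g.2.1 g.2.2).2.1⟩),
    markInv_mem hc g⟩

lemma lastIdx_markMap (hc : 1 ≤ c) (q : AType n c) :
    lastIdx (Tr q.1.1 q.1.2) c = (q.1.2 : ℕ) := by
  obtain ⟨⟨f, i⟩, ⟨⟨hpos0, hend0⟩, hup, hht⟩⟩ := q
  simp only at hup hht ⊢
  have hpos : ∀ m, 0 ≤ Hgt f m := hpos0
  have hend : Hgt f n = 0 := hend0
  have hi : (i:ℕ) < n := i.isLt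
  have hP : Hgt (Tr f i) (i:ℕ) = c - 1 := by
    rw [Hgt_Tr_le f i (by omega)]
    have := Hgt_succ f hi
    simp only [Fin.eta, hup, if_true] at this
    omega
  apply le_antisymm
  · -- findGreatest ≤ i
    rcases Nat.lt_or_ge (i:ℕ) (lastIdx (Tr f i) c) with h | h
    · exfalso
      have hle : lastIdx (Tr f i) c ≤ n := Nat.findGreatest_le n
      have hspec : Hgt (Tr f i) (lastIdx (Tr f i) c) = c - 1 := by
        unfold lastIdx
        exact Nat.findGreatest_spec (P := fun m => Hgt (Tr f i) m = c - 1) (n := n)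
          (m := (i:ℕ)) (by omega) hP
      have hle1 : (i:ℕ) + 1 ≤ lastIdx (Tr f i) c := by omega
      have hval := Hgt_Tr_ge f hi (lastIdx (Tr f i) c) hle1 hle
      rw [hht, hend] at hval
      have := hpos (n + (i:ℕ) + 1 - lastIdx (Tr f i) c)
      omega
    · exact h
  · exact Nat.le_findGreatest (by omega) hP


lemma markMap_bij (hc : 1 ≤ c) : Function.Bijective (markMap : AType n c → BType n c) := by
  constructor
  · intro q q' heq
    have heq1 : Tr q.1.1 q.1.2 = Tr q'.1.1 q'.1.2 := congrArg Subtype.val heq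
    have hidx : (q.1.2 : ℕ) = (q'.1.2 : ℕ) := by
      rw [← lastIdx_markMap hc q, ← lastIdx_markMap hc q', heq1]
    have hf : q.1.1 = q'.1.1 := by
      have h1 := Tr_Tr q.1.1 (i := q.1.2) q.1.2.isLt
      have h2 := Tr_Tr q'.1.1 (i := q'.1.2) q'.1.2.isLt
      rw [← h1, ← h2, heq1, hidx]
    apply Subtype.ext
    apply Prod.ext hf (Fin.ext hidx)
  · intro g
    refine ⟨markInv hc g, ?_⟩
    apply Subtype.ext
    show Tr (Tr g.1 (lastIdx g.1 c)) (lastIdx g.1 c) = g.1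
    exact Tr_Tr g.1 (lastIdx_spec hc g.1 g.2.1 g.2.2).2.1

lemma card_AType (k r : ℕ) (hr1 : 1 ≤ r) (hrk : r ≤ k) :
    Nat.card (AType (2*k) (r:ℤ)) = (2*k).choose (k+r) - (2*k).choose (k+r+1) := by
  have h1 : Nat.card (AType (2*k) (r:ℤ)) = Nat.card (BType (2*k) (r:ℤ)) :=
    Nat.card_eq_of_bijective _ (markMap_bij (by exact_mod_cast hr1))
  rw [h1]
  unfold BType
  rw [card_nonneg_endpoint (2*(r:ℤ)) (by positivity) (k+r) (by push_cast; ring) (by omega)]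

end Marked

end NCProof
namespace NCProof

variable {n : ℕ} {π : Setoid (Fin n)}

noncomputable def ptr (hp : IsPairing π) (i : Fin n) : Fin n := (hp i).choose

lemma ptr_ne (hp : IsPairing π) (i : Fin n) : ptr hp i ≠ i := (hp i).choose_spec.1

lemma ptr_rel (hp : IsPairing π) (i : Fin n) : π.r i (ptr hp i) := (hp i).choose_spec.2.1

lemma ptr_eq_of_rel (hp : IsPairing π) {i l : Fin n} (h : π.r i l) : l = i ∨ l = ptr hp i :=
  (hp i).choose_spec.2.2 l h

lemma ptr_ptr (hp : IsPairing π) (i : Fin n) : ptr hp (ptr hp i) = i := by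
  have h : π.r (ptr hp i) i := π.iseqv.symm (ptr_rel hp i)
  rcases ptr_eq_of_rel hp h with h1 | h1
  · exact absurd h1.symm (ptr_ne hp i)
  · exact h1.symm

lemma rel_iff (hp : IsPairing π) {i j : Fin n} : π.r i j ↔ j = i ∨ j = ptr hp i := by
  constructor
  · exact ptr_eq_of_rel hp
  · rintro (rfl | rfl)
    · exact π.iseqv.refl _
    · exact ptr_rel hp _

open Classical in
noncomputable def toWord (π : Setoid (Fin n)) : Fin n → Bool :=
  fun j => decide (∃ p, π.r j p ∧ j < p)

open Classical in
lemma toWord_iff (hp : IsPairing π) (j : Fin n) :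
    toWord π j = true ↔ j < ptr hp j := by
  unfold toWord
  rw [decide_eq_true_iff]
  constructor
  · rintro ⟨p, hrel, hlt⟩
    rcases ptr_eq_of_rel hp hrel with rfl | rfl
    · exact absurd hlt (lt_irrefl _)
    · exact hlt
  · intro h
    exact ⟨ptr hp j, ptr_rel hp j, h⟩

open Classical in
lemma height_filter (hp : IsPairing π) (i : ℕ) :
    height π i = (Finset.univ.filter
      (fun j : Fin n => (j:ℕ) < i ∧ i ≤ (ptr hp j : ℕ))).card := by
  unfold height
  rw [Nat.card_eq_fintype_card, Fintype.card_subtype]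
  congr 1
  apply Finset.filter_congr
  intro j _
  constructor
  · rintro ⟨hji, p, hrel, hip⟩
    refine ⟨hji, ?_⟩
    rcases ptr_eq_of_rel hp hrel with rfl | rfl
    · omega
    · exact hip
  · rintro ⟨hji, hile⟩
    exact ⟨hji, ptr hp j, ptr_rel hp j, hile⟩

open Classical in
lemma height_eq_hgt (hp : IsPairing π) (i : ℕ) :
    (height π i : ℤ) = Hgt (toWord π) i := by
  classical
  have hO : (Finset.univ.filter (fun j : Fin n => (j:ℕ) < i ∧ toWord π j = true))
      = Finset.univ.filter (fun j : Fin n => (j:ℕ) < i ∧ (j:ℕ) < (ptr hp j : ℕ)) := by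
    apply Finset.filter_congr
    intro j _
    rw [toWord_iff hp j]
    exact Iff.rfl
  have hCl : (Finset.univ.filter (fun j : Fin n => (j:ℕ) < i ∧ ¬ toWord π j = true))
      = Finset.univ.filter (fun j : Fin n => (j:ℕ) < i ∧ (ptr hp j : ℕ) < (j:ℕ)) := by
    apply Finset.filter_congr
    intro j _
    rw [toWord_iff hp j]
    have hne : ptr hp j ≠ j := ptr_ne hp j
    constructor
    · rintro ⟨h1, h2⟩
      refine ⟨h1, ?_⟩
      rcases lt_trichotomy (ptr hp j) j with h | h | h
      · exact h
      · exact absurd h hne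
      · exact absurd h h2
    · rintro ⟨h1, h2⟩
      exact ⟨h1, not_lt.mpr (le_of_lt h2)⟩
  -- split the openers
  have hsplitO : (Finset.univ.filter (fun j : Fin n => (j:ℕ) < i ∧ (j:ℕ) < (ptr hp j : ℕ))).card
      = (Finset.univ.filter (fun j : Fin n => (j:ℕ) < i ∧ i ≤ (ptr hp j : ℕ))).card
        + (Finset.univ.filter (fun j : Fin n =>
            (j:ℕ) < i ∧ (j:ℕ) < (ptr hp j : ℕ) ∧ (ptr hp j : ℕ) < i)).card := by
    rw [← Finset.card_union_of_disjoint]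
    · congr 1
      ext j
      simp only [Finset.mem_union, Finset.mem_filter, Finset.mem_univ, true_and]
      constructor
      · rintro ⟨h1, h2⟩
        rcases le_or_gt i (ptr hp j : ℕ) with h | h
        · exact Or.inl ⟨h1, h⟩
        · exact Or.inr ⟨h1, h2, h⟩
      · rintro (⟨h1, h2⟩ | ⟨h1, h2, h3⟩)
        · exact ⟨h1, by omega⟩
        · exact ⟨h1, h2⟩
    · rw [Finset.disjoint_filter]
      rintro j _ ⟨h1, h2⟩ ⟨h3, h4, h5⟩
      omega
  -- closers in bijection with openers closed before i
  have hbij : (Finset.univ.filter (fun j : Fin n =>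
        (j:ℕ) < i ∧ (j:ℕ) < (ptr hp j : ℕ) ∧ (ptr hp j : ℕ) < i)).card
      = (Finset.univ.filter (fun j : Fin n => (j:ℕ) < i ∧ (ptr hp j : ℕ) < (j:ℕ))).card := by
    apply Finset.card_bij (fun j _ => ptr hp j)
    · intro j hj
      simp only [Finset.mem_filter, Finset.mem_univ, true_and] at hj ⊢
      rw [ptr_ptr hp j]
      exact ⟨hj.2.2, hj.2.1⟩
    · intro j hj j' hj' heq
      have := congrArg (ptr hp) heq
      rwa [ptr_ptr hp, ptr_ptr hp] at this
    · intro c hc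
      simp only [Finset.mem_filter, Finset.mem_univ, true_and] at hc
      refine ⟨ptr hp c, ?_, ptr_ptr hp c⟩
      simp only [Finset.mem_filter, Finset.mem_univ, true_and]
      rw [ptr_ptr hp c]
      exact ⟨by omega, hc.2, hc.1⟩
  rw [height_filter hp i, Hgt_split, hO, hCl, hsplitO, hbij]
  push_cast
  ring
end NCProof
namespace NCProof

variable {n : ℕ} {π : Setoid (Fin n)}

lemma toWord_nonneg (hp : IsPairing π) (i : ℕ) : 0 ≤ Hgt (toWord π) i := by
  rw [← height_eq_hgt hp i]
  exact Int.natCast_nonneg _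

lemma toWord_end (hp : IsPairing π) : Hgt (toWord π) n = 0 := by
  rw [← height_eq_hgt hp n]
  have : height π n = 0 := by
    unfold height
    have : IsEmpty {j : Fin n // (j:ℕ) < n ∧ ∃ p : Fin n, π.r j p ∧ n ≤ (p:ℕ)} := by
      refine ⟨?_⟩
      rintro ⟨j, hj, p, hrel, hnp⟩
      exact absurd p.isLt (not_lt.mpr hnp)
    exact Nat.card_of_isEmpty
  rw [this]
  rfl

/-- `j` closes the opener `i`. -/
def Mrel (f : Fin n → Bool) (i j : Fin n) : Prop :=
  i < j ∧ Hgt f ((j:ℕ)+1) = Hgt f (i:ℕ) ∧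
    ∀ l : ℕ, (i:ℕ) < l → l ≤ (j:ℕ) → Hgt f (i:ℕ) < Hgt f l

lemma Mrel_up {f : Fin n → Bool} {i j : Fin n} (h : Mrel f i j) : f i = true := by
  obtain ⟨hij, heq, hcl⟩ := h
  have h1 := hcl ((i:ℕ)+1) (by omega) (by exact_mod_cast hij)
  have h2 := Hgt_succ f i.isLt
  simp only [Fin.eta] at h2
  by_cases hb : f i
  · exact hb
  · rw [if_neg (by simp [hb])] at h2
    omega

lemma Mrel_down {f : Fin n → Bool} {i j : Fin n} (h : Mrel f i j) : f j = false := by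
  obtain ⟨hij, heq, hcl⟩ := h
  have h1 := hcl (j:ℕ) (by exact_mod_cast hij) (le_refl _)
  have h2 := Hgt_succ f j.isLt
  simp only [Fin.eta] at h2
  by_cases hb : f j
  · rw [if_pos hb] at h2
    omega
  · simp [hb]

open Classical in
lemma Mrel_exists_up {f : Fin n → Bool} (hpos : ∀ m, 0 ≤ Hgt f m) (hend : Hgt f n = 0)
    {i : Fin n} (hi : f i = true) : ∃ j, Mrel f i j := by
  classical
  have hstep : Hgt f ((i:ℕ)+1) = Hgt f (i:ℕ) + 1 := by
    have := Hgt_succ f i.isLt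
    simp only [Fin.eta, hi, if_true] at this
    omega
  have hex : ∃ l, (i:ℕ) < l ∧ Hgt f l = Hgt f (i:ℕ) := by
    obtain ⟨l, hl1, hl2, hl3⟩ := IVT_down f (Hgt f (i:ℕ)) n ((i:ℕ)+1) i.isLt
      (by rw [hend]; exact hpos _) (by omega)
    exact ⟨l, by omega, hl3⟩
  set jn := Nat.find hex with hjn
  obtain ⟨hjn1, hjn2⟩ := Nat.find_spec hex
  rw [← hjn] at hjn1 hjn2
  have hmin : ∀ l, l < jn → ¬ ((i:ℕ) < l ∧ Hgt f l = Hgt f (i:ℕ)) := fun l hl => Nat.find_min hex hl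
  have hjnn : jn ≤ n := by
    obtain ⟨l, hl1, hl2, hl3⟩ := IVT_down f (Hgt f (i:ℕ)) n ((i:ℕ)+1) i.isLt
      (by rw [hend]; exact hpos _) (by omega)
    exact le_trans (Nat.find_min' hex ⟨by omega, hl3⟩) hl2
  have hjne : jn ≠ (i:ℕ) + 1 := by
    intro h
    rw [h] at hjn2
    omega
  have hjge : (i:ℕ) + 2 ≤ jn := by omega
  refine ⟨⟨jn - 1, by omega⟩, ?_, ?_, ?_⟩
  · show (i:ℕ) < jn - 1
    omega
  · show Hgt f ((jn - 1) + 1) = Hgt f (i:ℕ)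
    rw [show jn - 1 + 1 = jn by omega]
    exact hjn2
  · intro l hl1 hl2
    simp only at hl2
    have hne : Hgt f l ≠ Hgt f (i:ℕ) := fun h => hmin l (by omega) ⟨hl1, h⟩
    rcases lt_or_gt_of_ne hne with h | h
    · exfalso
      obtain ⟨l', hl1', hl2', hl3'⟩ := IVT_down f (Hgt f (i:ℕ)) l ((i:ℕ)+1)
        (by omega) (le_of_lt h) (by omega)
      exact hmin l' (by omega) ⟨by omega, hl3'⟩
    · exact h

open Classical in
lemma Mrel_exists_down {f : Fin n → Bool} (hpos : ∀ m, 0 ≤ Hgt f m)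
    {i : Fin n} (hi : f i = false) : ∃ j, Mrel f j i := by
  classical
  have hstep : Hgt f ((i:ℕ)+1) = Hgt f (i:ℕ) - 1 := by
    have := Hgt_succ f i.isLt
    simp only [Fin.eta, hi] at this
    simp at this
    omega
  have hex : ∃ l, l ≤ (i:ℕ) ∧ Hgt f l = Hgt f ((i:ℕ)+1) := by
    obtain ⟨l, hl1, hl2, hl3⟩ := IVT_up f (Hgt f ((i:ℕ)+1)) (i:ℕ) 0 (Nat.zero_le _)
      (by rw [Hgt_zero]; exact hpos _) (by omega)
    exact ⟨l, hl2, hl3⟩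
  obtain ⟨w, hw1, hw2⟩ := hex
  set jg := Nat.findGreatest (fun m => Hgt f m = Hgt f ((i:ℕ)+1)) (i:ℕ) with hjg
  have hspec : Hgt f jg = Hgt f ((i:ℕ)+1) := by
    rw [hjg]
    exact Nat.findGreatest_spec (P := fun m => Hgt f m = Hgt f ((i:ℕ)+1)) (n := (i:ℕ))
      (m := w) hw1 hw2
  have hle : jg ≤ (i:ℕ) := Nat.findGreatest_le _
  have hgr : ∀ l, jg < l → l ≤ (i:ℕ) → Hgt f l ≠ Hgt f ((i:ℕ)+1) := by
    intro l h1 h2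
    exact Nat.findGreatest_is_greatest h1 h2
  have hjne : jg ≠ (i:ℕ) := by
    intro h
    rw [h] at hspec
    omega
  refine ⟨⟨jg, by omega⟩, ?_, ?_, ?_⟩
  · show jg < (i:ℕ)
    omega
  · show Hgt f ((i:ℕ)+1) = Hgt f jg
    exact hspec.symm
  · intro l hl1 hl2
    simp only at hl1 hl2 ⊢
    rw [hspec]
    have hne : Hgt f l ≠ Hgt f ((i:ℕ)+1) := hgr l hl1 hl2
    rcases lt_or_gt_of_ne hne with h | h
    · exfalso
      obtain ⟨l', hl1', hl2', hl3'⟩ := IVT_up f (Hgt f ((i:ℕ)+1)) (i:ℕ) l hl2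
        (le_of_lt h) (by omega)
      exact hgr l' (by omega) hl2' hl3'
    · exact h

lemma Mrel_unique {f : Fin n → Bool} {i j j' : Fin n}
    (h : Mrel f i j ∨ Mrel f j i) (h' : Mrel f i j' ∨ Mrel f j' i) : j = j' := by
  have MM1 : ∀ {a b b' : Fin n}, Mrel f a b → Mrel f a b' → b = b' := by
    intro a b b' hab hab'
    rcases lt_trichotomy b b' with h1 | h1 | h1
    · exfalso
      have := hab'.2.2 ((b:ℕ)+1) (by have := hab.1; omega) (by have : (b:ℕ) < (b':ℕ) := h1; omega)
      rw [hab.2.1] at this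
      omega
    · exact h1
    · exfalso
      have := hab.2.2 ((b':ℕ)+1) (by have := hab'.1; omega) (by have : (b':ℕ) < (b:ℕ) := h1; omega)
      rw [hab'.2.1] at this
      omega
  have MM2 : ∀ {a b b' : Fin n}, Mrel f a b → Mrel f b' a → False := by
    intro a b b' hab hb'a
    have h1 := hab.2.2 ((a:ℕ)+1) (by omega) (by have := hab.1; exact_mod_cast this)
    have h2 := hb'a.2.2 (a:ℕ) (by have := hb'a.1; exact_mod_cast this) (le_refl _)
    rw [hb'a.2.1] at h1
    omega
  have MM3 : ∀ {a b b' : Fin n}, Mrel f b a → Mrel f b' a → b = b' := by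
    intro a b b' hba hb'a
    rcases lt_trichotomy b b' with h1 | h1 | h1
    · exfalso
      have := hba.2.2 (b':ℕ) (by exact_mod_cast h1) (by have := hb'a.1; exact_mod_cast le_of_lt this)
      rw [← hba.2.1, hb'a.2.1] at this
      omega
    · exact h1
    · exfalso
      have := hb'a.2.2 (b:ℕ) (by exact_mod_cast h1) (by have := hba.1; exact_mod_cast le_of_lt this)
      rw [← hb'a.2.1, hba.2.1] at this
      omega
  rcases h with h | h <;> rcases h' with h' | h'
  · exact MM1 h h'
  · exact (MM2 h h').elim
  · exact (MM2 h' h).elim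
  · exact MM3 h h'

def wordRel (f : Fin n → Bool) : Fin n → Fin n → Prop :=
  fun a b => a = b ∨ Mrel f a b ∨ Mrel f b a

lemma wordRel_equivalence (f : Fin n → Bool) : Equivalence (wordRel f) := by
  constructor
  · intro a; exact Or.inl rfl
  · intro a b h
    rcases h with rfl | h | h
    · exact Or.inl rfl
    · exact Or.inr (Or.inr h)
    · exact Or.inr (Or.inl h)
  · intro a b c hab hbc
    rcases hab with rfl | hab
    · exact hbc
    · rcases hbc with rfl | hbc
      · exact Or.inr hab
      · have : a = c := by
          apply Mrel_unique (i := b)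
          · rcases hab with h | h
            · exact Or.inr h
            · exact Or.inl h
          · exact hbc
        exact Or.inl this

def wordSetoid (f : Fin n → Bool) : Setoid (Fin n) := ⟨wordRel f, wordRel_equivalence f⟩

lemma wordSetoid_pairing {f : Fin n → Bool} (hpos : ∀ m, 0 ≤ Hgt f m) (hend : Hgt f n = 0) :
    IsPairing (wordSetoid f) := by
  intro i
  by_cases hi : f i = true
  · obtain ⟨j, hj⟩ := Mrel_exists_up hpos hend hi
    refine ⟨j, ?_, Or.inr (Or.inl hj), ?_⟩
    · have := hj.1; exact (ne_of_lt this).symm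
    · intro l hl
      rcases hl with rfl | hl
      · exact Or.inl rfl
      · exact Or.inr (Mrel_unique hl (Or.inl hj))
  · obtain ⟨j, hj⟩ := Mrel_exists_down hpos (by simpa using hi)
    refine ⟨j, ?_, Or.inr (Or.inr hj), ?_⟩
    · have := hj.1; exact ne_of_lt this
    · intro l hl
      rcases hl with rfl | hl
      · exact Or.inl rfl
      · exact Or.inr (Mrel_unique hl (Or.inr hj))

lemma wordSetoid_nc (f : Fin n → Bool) : IsNoncrossing (wordSetoid f) := by
  rintro ⟨a, b, c, d, hab, hbc, hcd, rac, rbd, -⟩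
  have hMac : Mrel f a c := by
    rcases rac with rfl | h | h
    · exact absurd hab (by intro h; exact absurd (lt_trans h hbc) (lt_irrefl _))
    · exact h
    · exact absurd h.1 (not_lt.mpr (le_of_lt (lt_trans hab hbc)))
  have hMbd : Mrel f b d := by
    rcases rbd with rfl | h | h
    · exact absurd hbc (by intro h; exact absurd (lt_trans h hcd) (lt_irrefl _))
    · exact h
    · exact absurd h.1 (not_lt.mpr (le_of_lt (lt_trans hbc hcd)))
  have h1 : Hgt f (a:ℕ) < Hgt f (b:ℕ) :=
    hMac.2.2 (b:ℕ) (by exact_mod_cast hab) (by exact_mod_cast le_of_lt hbc)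
  have h2 : Hgt f (b:ℕ) < Hgt f ((c:ℕ)+1) := by
    apply hMbd.2.2 ((c:ℕ)+1) (by have : (b:ℕ) < (c:ℕ) := hbc; omega)
      (by have : (c:ℕ) < (d:ℕ) := hcd; omega)
  rw [hMac.2.1] at h2
  omega

end NCProof
namespace NCProof

variable {n : ℕ} {π : Setoid (Fin n)}

open Classical in
lemma toWord_wordSetoid {f : Fin n → Bool} (hpos : ∀ m, 0 ≤ Hgt f m) (hend : Hgt f n = 0) :
    toWord (wordSetoid f) = f := by
  funext j
  unfold toWord
  cases hj : f j
  · apply decide_eq_false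
    rintro ⟨p, hrel, hlt⟩
    rcases hrel with rfl | h | h
    · exact absurd hlt (lt_irrefl _)
    · rw [Mrel_up h] at hj; exact absurd hj (by decide)
    · exact absurd h.1 (not_lt.mpr (le_of_lt hlt))
  · apply decide_eq_true
    obtain ⟨j', hj'⟩ := Mrel_exists_up hpos hend hj
    exact ⟨j', Or.inr (Or.inl hj'), hj'.1⟩

/-- In a noncrossing pairing, the matched-parenthesis relation holds between partners. -/
lemma Mrel_of_partner (hp : IsPairing π) (hnc : IsNoncrossing π) {i : Fin n}
    (hlt : i < ptr hp i) : Mrel (toWord π) i (ptr hp i) := by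
  classical
  set p := ptr hp i with hpdef
  have hppi : ptr hp p = i := by rw [hpdef, ptr_ptr]
  -- key crossing fact: any opener before i that is open at i stays open past p
  have hbig : ∀ j : Fin n, (j:ℕ) < (i:ℕ) → (i:ℕ) ≤ (ptr hp j : ℕ) → (p:ℕ) < (ptr hp j : ℕ) := by
    intro j hji hile
    have hne1 : ptr hp j ≠ i := by
      intro h
      have hj2 : j = ptr hp i := by
        conv_lhs => rw [← ptr_ptr hp j]
        rw [h]
      rw [← hpdef] at hj2
      have hj3 : (j:ℕ) = (p:ℕ) := congrArg Fin.val hj2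
      have : (i:ℕ) < (p:ℕ) := hlt
      omega
    have hne2 : ptr hp j ≠ p := by
      intro h
      have hj2 : j = i := by
        conv_lhs => rw [← ptr_ptr hp j]
        rw [h]
        exact hppi
      have hj3 : (j:ℕ) = (i:ℕ) := congrArg Fin.val hj2
      omega
    by_contra hcon
    push_neg at hcon
    -- j < i < ptr j < p : crossing
    have h1 : (i:ℕ) < (ptr hp j : ℕ) := by
      rcases lt_or_eq_of_le hile with h | h
      · exact h
      · exact absurd (Fin.ext h.symm) hne1
    have h2 : (ptr hp j : ℕ) < (p:ℕ) := by
      rcases lt_or_eq_of_le hcon with h | h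
      · exact h
      · exact absurd (Fin.ext h) hne2
    apply hnc
    refine ⟨j, i, ptr hp j, p, ?_, ?_, ?_, ptr_rel hp j, ptr_rel hp i, ?_⟩
    · exact hji
    · exact h1
    · exact h2
    · intro hrel
      rcases ptr_eq_of_rel hp hrel with h | h
      · exact absurd h.symm (ne_of_lt (show j < i from hji))
      · rw [h] at h1; omega
  refine ⟨hlt, ?_, ?_⟩
  · -- heights at p+1 and i agree
    rw [← height_eq_hgt hp, ← height_eq_hgt hp]
    congr 1
    rw [height_filter hp, height_filter hp]
    congr 1
    ext j
    simp only [Finset.mem_filter, Finset.mem_univ, true_and]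
    constructor
    · rintro ⟨h1, h2⟩
      -- j ≤ p, p+1 ≤ ptr j
      have hjp : (j:ℕ) ≤ (p:ℕ) := by omega
      have hptr : (p:ℕ) < (ptr hp j : ℕ) := by omega
      have hne2 : j ≠ p := by
        intro h
        subst h
        rw [hppi] at hptr
        have : (i:ℕ) < (p:ℕ) := hlt
        omega
      have hne1 : j ≠ i := by
        intro h
        subst h
        rw [← hpdef] at hptr
        omega
      have hji : (j:ℕ) < (i:ℕ) := by
        by_contra hcon
        push_neg at hcon
        have hij : (i:ℕ) < (j:ℕ) := by
          rcases lt_or_eq_of_le hcon with h | h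
          · exact h
          · exact absurd (Fin.ext h.symm) hne1
        have hjp' : (j:ℕ) < (p:ℕ) := by
          rcases lt_or_eq_of_le hjp with h | h
          · exact h
          · exact absurd (Fin.ext h) hne2
        -- i < j < p < ptr j : crossing
        apply hnc
        refine ⟨i, j, p, ptr hp j, hij, hjp', hptr, ptr_rel hp i, ptr_rel hp j, ?_⟩
        intro hrel
        rcases ptr_eq_of_rel hp hrel with h | h
        · exact absurd h.symm (ne_of_lt (show i < j from hij))
        · rw [← hpdef] at h
          exact hne2 h
      exact ⟨hji, by have := hbig j hji (by omega); omega⟩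
    · rintro ⟨h1, h2⟩
      have := hbig j h1 h2
      have hip : (i:ℕ) < (p:ℕ) := hlt
      exact ⟨by omega, by omega⟩
  · -- strictly higher in between
    intro l hl1 hl2
    rw [← height_eq_hgt hp, ← height_eq_hgt hp]
    have hcard : height π (i:ℕ) + 1 ≤ height π l := by
      rw [height_filter hp, height_filter hp]
      have hsub : insert i (Finset.univ.filter
          (fun j : Fin n => (j:ℕ) < (i:ℕ) ∧ (i:ℕ) ≤ (ptr hp j : ℕ)))
          ⊆ Finset.univ.filter (fun j : Fin n => (j:ℕ) < l ∧ l ≤ (ptr hp j : ℕ)) := by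
        intro j hj
        rcases Finset.mem_insert.mp hj with rfl | hj
        · simp only [Finset.mem_filter, Finset.mem_univ, true_and]
          exact ⟨hl1, by rw [← hpdef]; omega⟩
        · simp only [Finset.mem_filter, Finset.mem_univ, true_and] at hj ⊢
          have := hbig j hj.1 hj.2
          exact ⟨by omega, by omega⟩
      calc (Finset.univ.filter
          (fun j : Fin n => (j:ℕ) < (i:ℕ) ∧ (i:ℕ) ≤ (ptr hp j : ℕ))).card + 1
          = (insert i (Finset.univ.filter
            (fun j : Fin n => (j:ℕ) < (i:ℕ) ∧ (i:ℕ) ≤ (ptr hp j : ℕ)))).card := by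
            rw [Finset.card_insert_of_notMem]
            simp
      _ ≤ _ := Finset.card_le_card hsub
    exact_mod_cast hcard

lemma wordSetoid_toWord (hp : IsPairing π) (hnc : IsNoncrossing π) :
    wordSetoid (toWord π) = π := by
  apply Setoid.ext
  intro a b
  show a = b ∨ Mrel (toWord π) a b ∨ Mrel (toWord π) b a ↔ π.r a b
  constructor
  · rintro (rfl | h | h)
    · exact π.iseqv.refl a
    · have hup : a < ptr hp a := (toWord_iff hp a).mp (Mrel_up h)
      have hM := Mrel_of_partner hp hnc hup
      have : b = ptr hp a := Mrel_unique (Or.inl h) (Or.inl hM)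
      rw [this]
      exact ptr_rel hp a
    · have hup : b < ptr hp b := (toWord_iff hp b).mp (Mrel_up h)
      have hM := Mrel_of_partner hp hnc hup
      have : a = ptr hp b := Mrel_unique (i := b) (Or.inl h) (Or.inl hM)
      rw [this]
      exact π.iseqv.symm (ptr_rel hp b)
  · intro hrel
    rcases ptr_eq_of_rel hp hrel with rfl | rfl
    · exact Or.inl rfl
    · rcases lt_trichotomy a (ptr hp a) with h | h | h
      · exact Or.inr (Or.inl (Mrel_of_partner hp hnc h))
      · exact absurd h.symm (ptr_ne hp a)
      · refine Or.inr (Or.inr ?_)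
        have h2 : ptr hp a < ptr hp (ptr hp a) := by rw [ptr_ptr]; exact h
        have := Mrel_of_partner hp hnc h2
        rwa [ptr_ptr] at this

end NCProof

open NCProof

/-- Summed over all noncrossing pair partitions of `{1,…,2k}`, the number of pairs `i ∼ j`
(`i < j`) with height statistic `h_π(i) = r` equals `binom(2k,k-r) - binom(2k,k-r-1)`,
written here in the equivalent symmetric form `binom(2k,k+r) - binom(2k,k+r+1)`. -/
theorem total_pairs_with_height_eq (k r : ℕ) (hr1 : 1 ≤ r) (hrk : r ≤ k) :
    (∑ π : {π : Setoid (Fin (2 * k)) // IsPairing π ∧ IsNoncrossing π},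
      Nat.card {i : Fin (2 * k) //
        (∃ p : Fin (2 * k), π.1.r i p ∧ i < p) ∧ height π.1 ((i : ℕ) + 1) = r}) =
      (2 * k).choose (k + r) - (2 * k).choose (k + r + 1) := by
  classical
  have hr1' : (1:ℤ) ≤ (r:ℤ) := by exact_mod_cast hr1
  -- the equivalence between noncrossing pairings and Dyck words
  let E : {π : Setoid (Fin (2*k)) // IsPairing π ∧ IsNoncrossing π} ≃
      {f : Fin (2*k) → Bool // (∀ m, 0 ≤ Hgt f m) ∧ Hgt f (2*k) = 0} :=
    { toFun := fun π => ⟨toWord π.1, fun m => toWord_nonneg π.2.1 m, toWord_end π.2.1⟩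
      invFun := fun f => ⟨wordSetoid f.1,
        wordSetoid_pairing f.2.1 f.2.2, wordSetoid_nc f.1⟩
      left_inv := fun π => Subtype.ext (wordSetoid_toWord π.2.1 π.2.2)
      right_inv := fun f => Subtype.ext (toWord_wordSetoid f.2.1 f.2.2) }
  set G : (Fin (2*k) → Bool) → ℕ := fun p => Nat.card {i : Fin (2*k) //
    ((∀ m, 0 ≤ Hgt p m) ∧ Hgt p (2*k) = 0) ∧ p i = true ∧ Hgt p ((i:ℕ)+1) = (r:ℤ)}
    with hG
  have h1 : (∑ π : {π : Setoid (Fin (2 * k)) // IsPairing π ∧ IsNoncrossing π},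
      Nat.card {i : Fin (2 * k) //
        (∃ p : Fin (2 * k), π.1.r i p ∧ i < p) ∧ height π.1 ((i : ℕ) + 1) = r})
      = ∑ f : {f : Fin (2*k) → Bool // (∀ m, 0 ≤ Hgt f m) ∧ Hgt f (2*k) = 0}, G f.1 := by
    apply Fintype.sum_equiv E
    intro π
    rw [hG]
    apply Nat.card_congr
    apply Equiv.subtypeEquivRight
    intro i
    constructor
    · rintro ⟨hex, hht⟩
      refine ⟨⟨fun m => toWord_nonneg π.2.1 m, toWord_end π.2.1⟩, ?_, ?_⟩
      · exact decide_eq_true hex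
      · show Hgt (toWord π.1) ((i:ℕ)+1) = (r:ℤ)
        rw [← height_eq_hgt π.2.1, hht]
    · rintro ⟨-, hw, hht⟩
      refine ⟨of_decide_eq_true (show decide (∃ p, π.1.r i p ∧ i < p) = true from hw), ?_⟩
      have hht' : Hgt (toWord π.1) ((i:ℕ)+1) = (r:ℤ) := hht
      rw [← height_eq_hgt π.2.1] at hht'
      exact_mod_cast hht'
  have h2 : (∑ f : {f : Fin (2*k) → Bool // (∀ m, 0 ≤ Hgt f m) ∧ Hgt f (2*k) = 0}, G f.1)
      = ∑ p ∈ Finset.univ.filter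
          (fun p : Fin (2*k) → Bool => (∀ m, 0 ≤ Hgt p m) ∧ Hgt p (2*k) = 0), G p := by
    exact (Finset.sum_subtype _ (fun p => by simp) G).symm
  have h3 : (∑ p ∈ Finset.univ.filter
        (fun p : Fin (2*k) → Bool => (∀ m, 0 ≤ Hgt p m) ∧ Hgt p (2*k) = 0), G p)
      = ∑ p : Fin (2*k) → Bool, G p := by
    apply Finset.sum_subset (Finset.filter_subset _ _)
    intro p _ hp
    rw [Finset.mem_filter] at hp
    have hnd : ¬ ((∀ m, 0 ≤ Hgt p m) ∧ Hgt p (2*k) = 0) :=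
      fun h => hp ⟨Finset.mem_univ p, h⟩
    rw [hG]
    have : IsEmpty {i : Fin (2*k) //
        ((∀ m, 0 ≤ Hgt p m) ∧ Hgt p (2*k) = 0) ∧ p i = true ∧ Hgt p ((i:ℕ)+1) = (r:ℤ)} :=
      ⟨fun i => hnd i.2.1⟩
    exact Nat.card_of_isEmpty
  have h4 : (∑ p : Fin (2*k) → Bool, G p) = Nat.card (AType (2*k) (r:ℤ)) := by
    have he : AType (2*k) (r:ℤ) ≃ Σ p : Fin (2*k) → Bool, {i : Fin (2*k) //
        ((∀ m, 0 ≤ Hgt p m) ∧ Hgt p (2*k) = 0) ∧ p i = true ∧ Hgt p ((i:ℕ)+1) = (r:ℤ)} :=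
      Equiv.subtypeProdEquivSigmaSubtype
        (fun p (i : Fin (2*k)) =>
          ((∀ m, 0 ≤ Hgt p m) ∧ Hgt p (2*k) = 0) ∧ p i = true ∧ Hgt p ((i:ℕ)+1) = (r:ℤ))
    rw [Nat.card_congr he, Nat.card_eq_fintype_card, Fintype.card_sigma]
    apply Finset.sum_congr rfl
    intro p _
    exact Nat.card_eq_fintype_card
  rw [h1, h2, h3, h4]
  exact card_AType k r hr1 hrk
end

section
/- For the hypercube-type exponents, Σ_{l=1}^{⌈k/2⌉} d_{k,2l−1} = (1/(k+1))·binom(2k,k), where d_{kr} = f_{kr} − f_{k,r+1} and f_{kr} = binom(2k,k−r) − binom(2k,k−r−1). -/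
/-!
By Pascal's rule `f_{k,r+1} = b_r - b_{r+2}` with `b_x = binom(2k-1, k+x)`, so
`d_{k,2l-1} = F_{l-1} - F_l` for `F_i = b_{2i} - b_{2i+1}`. The sum telescopes to
`binom(2k-1, k) - binom(2k-1, k+1)` (`F_m = 0` for `m = ⌈k/2⌉`, as `k + 2m > 2k - 1`), and this is the
Catalan number because `(k+1) · catalan k = binom(2k, k) = 2 · binom(2k-1, k)` while
`(k+1) · binom(2k-1, k+1) = (k-1) · binom(2k-1, k)`.
-/

open Finset

/-- `f_{kr} = chooseDiff (2 * k) (k + r)`, by the symmetry `binom(2k, k-r) = binom(2k, k+r)`. -/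
def chooseDiff (n a : ℕ) : ℤ := n.choose a - n.choose (a + 1)

theorem chooseDiff_succ_succ (n a : ℕ) :
    chooseDiff (n + 1) (a + 1) = n.choose a - n.choose (a + 2) := by
  rw [chooseDiff, Nat.choose_succ_succ', Nat.choose_succ_succ' n (a + 1)]
  push_cast
  ring

theorem catalan_succ_eq_chooseDiff (j : ℕ) :
    (catalan (j + 1) : ℤ) = chooseDiff (2 * j + 1) (j + 1) := by
  have hcentral : ((j + 2 : ℤ) * catalan (j + 1)) = 2 * (2 * j + 1).choose (j + 1) := by
    have h := succ_mul_catalan_eq_centralBinom (j + 1)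
    rw [Nat.centralBinom_eq_two_mul_choose, show 2 * (j + 1) = 2 * j + 1 + 1 by ring,
      Nat.choose_succ_succ', ← Nat.choose_symm_half] at h
    exact_mod_cast h.trans (two_mul _).symm
  have hratio : ((2 * j + 1).choose (j + 2) * (j + 2) : ℤ) = (2 * j + 1).choose (j + 1) * j := by
    have h := Nat.choose_succ_right_eq (2 * j + 1) (j + 1)
    rw [show 2 * j + 1 - (j + 1) = j by omega] at h
    exact_mod_cast h
  refine mul_left_cancel₀ (show (j + 2 : ℤ) ≠ 0 by positivity) ?_
  rw [chooseDiff]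
  linear_combination hcentral + hratio

theorem Finset.sum_range_sub_pairs_of_eq_sub {M : Type*} [AddCommGroup M] (g b : ℕ → M)
    (h : ∀ r, g r = b r - b (r + 2)) (m : ℕ) :
    ∑ i ∈ range m, (g (2 * i) - g (2 * i + 1)) = (b 0 - b 1) - (b (2 * m) - b (2 * m + 1)) := by
  rw [← sum_range_sub' (fun i => b (2 * i) - b (2 * i + 1))]
  refine sum_congr rfl fun i _ => ?_
  rw [h, h, show 2 * i + 1 + 2 = 2 * (i + 1) + 1 by ring, show 2 * i + 2 = 2 * (i + 1) by ring]
  abel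

/-- `Σ_{l=1}^{⌈k/2⌉} d_{k,2l-1} = (1/(k+1))·binom(2k,k) = catalan k`, where
`d_{kr} = f_{kr} - f_{k,r+1}` and `f_{kr} = binom(2k,k-r) - binom(2k,k-r-1)` (binomials
with negative lower index vanish; `f` is written in the equivalent symmetric form
`binom(2k,k+r) - binom(2k,k+r+1)`). -/
theorem sum_odd_d_eq_catalan (k : ℕ) (hk : 1 ≤ k) :
    (∑ l ∈ Finset.Icc 1 ((k + 1) / 2),
      ((((2 * k).choose (k + (2 * l - 1)) : ℤ) - (2 * k).choose (k + (2 * l - 1) + 1)) -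
       (((2 * k).choose (k + 2 * l) : ℤ) - (2 * k).choose (k + 2 * l + 1)))) =
      catalan k := by
  obtain ⟨j, rfl⟩ : ∃ j, k = j + 1 := ⟨k - 1, by omega⟩
  set m := (j + 1 + 1) / 2
  set b : ℕ → ℤ := fun x => (2 * j + 1).choose (j + 1 + x)
  set g : ℕ → ℤ := fun r => chooseDiff (2 * (j + 1)) (j + 1 + (r + 1))
  have hg (r : ℕ) : g r = b r - b (r + 2) := by
    simp only [g, b, show 2 * (j + 1) = 2 * j + 1 + 1 by ring, ← add_assoc, chooseDiff_succ_succ]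
  have hvanish (x : ℕ) (hx : 2 * m ≤ x) : b x = 0 :=
    Nat.cast_eq_zero.mpr (Nat.choose_eq_zero_of_lt (by omega))
  calc _ = ∑ i ∈ range m, (g (2 * i) - g (2 * i + 1)) := by
        rw [← Ico_add_one_right_eq_Icc, sum_Ico_eq_sum_range, add_tsub_cancel_right]
        refine sum_congr rfl fun i _ => ?_
        simp only [g, chooseDiff]
        congr 5 <;> omega
    _ = (b 0 - b 1) - (b (2 * m) - b (2 * m + 1)) := sum_range_sub_pairs_of_eq_sub g b hg m
    _ = catalan (j + 1) := by
        rw [hvanish (2 * m) le_rfl, hvanish (2 * m + 1) (by omega), catalan_succ_eq_chooseDiff]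
        simp [b, chooseDiff]
end

section
/- Let f'_{lr} = binom(3l, l−r) − binom(3l, l−r−1) and d'_{lr} = f'_{lr} − f'_{l,r+1}. Then Σ_{s=2}^{l} ⌊s/2⌋ · d'_{ls} = binom(3l−1, l−2) for all l ≥ 1. -/
/-!
Summation by parts against `⌊s/2⌋`, whose increments are `1` at even `s` and `0` at odd `s`,
turns the sum into `∑ₖ f'_{l,2k}`, the boundary term vanishing because `f'_{l,l+1} = 0`.
That is an alternating tail of row `3l` of Pascal's triangle, which Pascal's rule telescopes
to `binom(3l-1, 2l+1)`.
-/

theorem sum_Icc_div_two_mul_sub_succ (g : ℕ → ℤ) (b : ℕ) :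
    ∑ s ∈ Finset.Icc 2 b, ((s / 2 : ℕ) : ℤ) * (g s - g (s + 1)) =
      ∑ k ∈ Finset.Icc 1 (b / 2), g (2 * k) - ((b / 2 : ℕ) : ℤ) * g (b + 1) := by
  induction b with
  | zero => simp
  | succ b ih =>
    rcases Nat.eq_zero_or_pos b with rfl | hb
    · simp
    rw [Finset.sum_Icc_succ_top (by omega), ih]
    rcases Nat.even_or_odd' b with ⟨k, rfl | rfl⟩
    · have h : (2 * k + 1) / 2 = k := by omega
      simp only [Nat.mul_div_cancel_left k two_pos, h]
      ring
    · have h : (2 * k + 1 + 1) / 2 = k + 1 := by omega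
      have h' : (2 * k + 1) / 2 = k := by omega
      rw [h, h', Finset.sum_Icc_succ_top (by omega)]
      push_cast
      ring_nf

theorem sum_Icc_choose_sub_choose (n a K : ℕ) :
    ∑ k ∈ Finset.Icc 1 K, ((n.choose (a + 2 * k) : ℤ) - n.choose (a + 2 * k + 1)) =
      ((n - 1).choose (a + 1) : ℤ) - (n - 1).choose (a + 2 * K + 1) := by
  cases n with
  | zero =>
    refine (Finset.sum_eq_zero fun k hk => ?_).trans (by simp)
    rw [Finset.mem_Icc] at hk
    simp [Nat.choose_eq_zero_of_lt (show 0 < a + 2 * k by omega)]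
  | succ m =>
    induction K with
    | zero => simp
    | succ K ih =>
      rw [Finset.sum_Icc_succ_top (by omega), ih]
      have h : a + 2 * (K + 1) = a + 2 * K + 1 + 1 := by ring
      rw [h, Nat.choose_succ_succ', Nat.choose_succ_succ']
      push_cast
      ring_nf

/-- `f'_{lr}` and `binom(3l-1, l-2)` appear in the symmetric forms
`binom(3l, 2l+r) - binom(3l, 2l+r+1)` and `binom(3l-1, 2l+1)`. -/
theorem sum_floor_half_d_eq_binom_general (l : ℕ) :
    (∑ s ∈ Finset.Icc 2 l, ((s / 2 : ℕ) : ℤ) *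
      ((((3 * l).choose (2 * l + s) : ℤ) - (3 * l).choose (2 * l + s + 1)) -
       (((3 * l).choose (2 * l + s + 1) : ℤ) - (3 * l).choose (2 * l + s + 2)))) =
      (3 * l - 1).choose (2 * l + 1) := by
  set f : ℕ → ℤ := fun s => ((3 * l).choose (2 * l + s) : ℤ) - (3 * l).choose (2 * l + s + 1)
  have hf : f (l + 1) = 0 := by
    simp only [f, Nat.choose_eq_zero_of_lt (show 3 * l < 2 * l + (l + 1) by omega),
      Nat.choose_eq_zero_of_lt (show 3 * l < 2 * l + (l + 1) + 1 by omega), sub_self]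
  calc _ = ∑ s ∈ Finset.Icc 2 l, ((s / 2 : ℕ) : ℤ) * (f s - f (s + 1)) := rfl
    _ = ∑ k ∈ Finset.Icc 1 (l / 2), f (2 * k) := by
      rw [sum_Icc_div_two_mul_sub_succ, hf, mul_zero, sub_zero]
    _ = ((3 * l - 1).choose (2 * l + 1) : ℤ) - (3 * l - 1).choose (2 * l + 2 * (l / 2) + 1) :=
      sum_Icc_choose_sub_choose (3 * l) (2 * l) (l / 2)
    _ = (3 * l - 1).choose (2 * l + 1) := by
      rw [Nat.choose_eq_zero_of_lt (show 3 * l - 1 < 2 * l + 2 * (l / 2) + 1 by omega)]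
      simp

/-- `Σ_{s=2}^{l} ⌊s/2⌋·d'_{ls} = binom(3l-1, l-2)`, where `d'_{lr} = f'_{lr} - f'_{l,r+1}`
and `f'_{lr} = binom(3l,l-r) - binom(3l,l-r-1)` (binomials with negative lower index
vanish; both `f'` and the right-hand side are written in the equivalent symmetric forms
`binom(3l,2l+r) - binom(3l,2l+r+1)` and `binom(3l-1,2l+1)`). -/
theorem sum_floor_half_d_eq_binom (l : ℕ) (hl : 1 ≤ l) :
    (∑ s ∈ Finset.Icc 2 l, ((s / 2 : ℕ) : ℤ) *
      ((((3 * l).choose (2 * l + s) : ℤ) - (3 * l).choose (2 * l + s + 1)) -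
       (((3 * l).choose (2 * l + s + 1) : ℤ) - (3 * l).choose (2 * l + s + 2)))) =
      (3 * l - 1).choose (2 * l + 1) :=
  sum_floor_half_d_eq_binom_general l
end

section
/- For partitions of {1,...,2l} into blocks of even size (the hyperoctahedral case), the number of partitions with exactly r blocks, summed with weight t^r, gives the generating polynomial T_{2l}(t) = Σ_{r=1}^{l} (1/r)·binom(l−1, r−1)·binom(2l, r−1)·t^r in the noncrossing (free) case: the number of noncrossing partitions of {1,...,2l} with all blocks of even size and exactly r blocks equals (1/r)·binom(l−1,r−1)·binom(2l,r−1). -/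
open Finset Polynomial

/-!
Record, at the least element of each block of a partition of `{0, …, n-1}`, the size of that
block, and `0` at the other points. For a noncrossing partition the lattice path with steps
`v i - 1` stays weakly above height `0` and returns to `0` after `n` steps (at each time its height
counts the points beyond that time whose block started before it), and every such Łukasiewicz
path comes from exactly one noncrossing partition: each point is matched with the last earlier
time at which the path is not above its height right after that point. Appending a letter `0`
gives words of length `n + 1` with sum `n`, and by the cycle lemma exactly one of the `n + 1`
rotations of any word of length `n + 1` and sum `n` is of this form. For `n = 2l` this makes
`(2l + 1)` times our count equal to the number of words of length `2l + 1` with `r` nonzero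
letters, all even, summing to `2l`, which is `binom(2l+1, r) * binom(l-1, r-1)` by stars and bars;
finally `r * binom(2l+1, r) = (2l+1) * binom(2l, r-1)`.
-/

namespace NCPartition

/-- Height after `k` steps of the lattice path whose `i`-th step is `f i - 1`. -/
def pathLevel (f : ℕ → ℕ) (k : ℕ) : ℤ := ∑ i ∈ range k, ((f i : ℤ) - 1)

@[simp] lemma pathLevel_zero (f : ℕ → ℕ) : pathLevel f 0 = 0 := rfl

lemma pathLevel_succ (f : ℕ → ℕ) (k : ℕ) : pathLevel f (k + 1) = pathLevel f k + f k - 1 := by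
  rw [pathLevel, sum_range_succ, ← pathLevel]; ring

lemma pathLevel_add (f : ℕ → ℕ) (a k : ℕ) :
    pathLevel f (a + k) = pathLevel f a + pathLevel (fun i => f (a + i)) k :=
  sum_range_add _ _ _

lemma pathLevel_congr {f g : ℕ → ℕ} {k : ℕ} (h : ∀ i < k, f i = g i) :
    pathLevel f k = pathLevel g k :=
  sum_congr rfl fun i hi => by rw [h i (mem_range.1 hi)]

lemma pathLevel_eq_sum_sub (f : ℕ → ℕ) (k : ℕ) : pathLevel f k = ∑ i ∈ range k, f i - k := by
  simp [pathLevel, sum_sub_distrib]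

variable {n : ℕ}

def padZero (v : Fin n → ℕ) (i : ℕ) : ℕ := if h : i < n then v ⟨i, h⟩ else 0

@[simp] lemma padZero_val (v : Fin n → ℕ) (i : Fin n) : padZero v i = v i := by
  simp [padZero]

lemma sum_range_padZero (v : Fin n → ℕ) : ∑ i ∈ range n, padZero v i = ∑ i, v i := by
  rw [← Fin.sum_univ_eq_sum_range]; simp

def level (v : Fin n → ℕ) : ℕ → ℤ := pathLevel (padZero v)

lemma level_succ_val (v : Fin n → ℕ) (i : Fin n) : level v (i + 1) = level v i + v i - 1 := by
  rw [level, pathLevel_succ, padZero_val]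

lemma level_self (v : Fin n → ℕ) : level v n = ∑ i, v i - n := by
  rw [level, pathLevel_eq_sum_sub, sum_range_padZero]

/-- Used with `m` the length of `v`, and with `m` one less than it in the cycle lemma. -/
def IsLukasiewicz (m : ℕ) (v : Fin n → ℕ) : Prop := (∀ k ≤ m, 0 ≤ level v k) ∧ ∑ i, v i = m

lemma sum_range_card_fiber {α : Type*} [Fintype α] (g : α → Fin n) (k : ℕ) :
    ∑ i ∈ range k, padZero (fun i => #{x | g x = i}) i = #{x | (g x : ℕ) < k} := by
  rw [card_eq_sum_card_fiberwise (f := fun x => (g x : ℕ)) (t := range k)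
    (fun x hx => by simpa using hx)]
  refine sum_congr rfl fun i hi => ?_
  rw [filter_filter]
  unfold padZero
  split_ifs with h
  · refine congrArg card (filter_congr fun x _ => ?_)
    simp only [Fin.ext_iff]; have := mem_range.1 hi; omega
  · symm; rw [card_eq_zero, filter_eq_empty_iff]; intro x _ hx; have := (g x).isLt; omega

end NCPartition

namespace Setoid

open scoped Classical

variable {n : ℕ} (π : Setoid (Fin n))

noncomputable def blockMin (i : Fin n) : Fin n :=
  ({j | π.r i j} : Finset (Fin n)).min' ⟨i, by simp⟩

variable {π}

lemma rel_blockMin (i : Fin n) : π.r i (π.blockMin i) :=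
  (mem_filter.1 (min'_mem _ _)).2

lemma blockMin_le {i j : Fin n} (h : π.r i j) : π.blockMin i ≤ j :=
  min'_le _ _ (by simpa using h)

lemma blockMin_le_self (i : Fin n) : π.blockMin i ≤ i := blockMin_le (π.refl' i)

lemma blockMin_eq_blockMin_iff {i j : Fin n} : π.blockMin i = π.blockMin j ↔ π.r i j := by
  refine ⟨fun h => π.trans' (rel_blockMin i) (h ▸ π.symm' (rel_blockMin j)), fun h => ?_⟩
  unfold blockMin
  congr 1
  ext x
  simp only [mem_filter, mem_univ, true_and]
  exact ⟨π.trans' (π.symm' h), π.trans' h⟩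

@[simp] lemma blockMin_blockMin (i : Fin n) : π.blockMin (π.blockMin i) = π.blockMin i :=
  blockMin_eq_blockMin_iff.2 (π.symm' (rel_blockMin i))

variable (π)

/-- `π.blockWord i` is the size of the block whose least element is `i`, and `0` if there is
none. -/
noncomputable def blockWord (i : Fin n) : ℕ := #{x | π.blockMin x = i}

variable {π}

lemma blockWord_blockMin (i : Fin n) :
    π.blockWord (π.blockMin i) = Nat.card {j // π.r i j} := by
  rw [Nat.card_eq_fintype_card, Fintype.card_subtype, blockWord]
  exact congrArg card (filter_congr fun x _ => by rw [eq_comm, blockMin_eq_blockMin_iff])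

lemma blockWord_ne_zero_iff {i : Fin n} : π.blockWord i ≠ 0 ↔ π.blockMin i = i := by
  refine ⟨fun h => ?_, fun h => ?_⟩
  · obtain ⟨x, hx⟩ := card_ne_zero.1 h
    rw [(mem_filter.1 hx).2.symm, blockMin_blockMin]
  · exact card_ne_zero_of_mem (by simpa using h)

lemma even_blockWord_iff :
    (∀ i, Even (π.blockWord i)) ↔ ∀ i, Even (Nat.card {j // π.r i j}) := by
  refine ⟨fun h i => blockWord_blockMin i ▸ h _, fun h i => ?_⟩
  by_cases hi : π.blockWord i = 0
  · simp [hi]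
  · rw [← blockWord_ne_zero_iff.1 hi, blockWord_blockMin]; exact h i

lemma card_blockWord_ne_zero : #{i | π.blockWord i ≠ 0} = nblocks π := by
  have hbij : Function.Bijective fun i : {i // π.blockMin i = i} => Quotient.mk π i.1 := by
    refine ⟨fun i j h => Subtype.ext ?_, fun q => ?_⟩
    · rw [← i.2, ← j.2, blockMin_eq_blockMin_iff]; exact Quotient.exact h
    · obtain ⟨x, rfl⟩ := Quotient.exists_rep q
      exact ⟨⟨_, blockMin_blockMin x⟩, Quotient.sound (π.symm' (rel_blockMin x))⟩
  rw [nblocks, ← Nat.card_eq_of_bijective _ hbij, Nat.card_eq_fintype_card, Fintype.card_subtype]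
  exact congrArg card (filter_congr fun i _ => blockWord_ne_zero_iff)

lemma level_blockWord {k : ℕ} (hk : k ≤ n) :
    NCPartition.level π.blockWord k = #{x : Fin n | k ≤ (x : ℕ) ∧ (π.blockMin x : ℕ) < k} := by
  have hsplit : #{x | (π.blockMin x : ℕ) < k} =
      #{x : Fin n | (x : ℕ) < k} + #{x : Fin n | k ≤ (x : ℕ) ∧ (π.blockMin x : ℕ) < k} := by
    rw [← card_union_of_disjoint (disjoint_filter.2 fun x _ h1 h2 => by omega)]
    congr 1
    ext x
    have : (π.blockMin x : ℕ) ≤ x := blockMin_le_self x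
    simp only [mem_filter, mem_univ, true_and, mem_union]
    omega
  unfold blockWord
  rw [NCPartition.level, NCPartition.pathLevel_eq_sum_sub, NCPartition.sum_range_card_fiber,
    hsplit, Fin.card_filter_val_lt, min_eq_right hk]
  push_cast
  ring

end Setoid

namespace IsNoncrossing

open Setoid

variable {n : ℕ} {π : Setoid (Fin n)} (hπ : IsNoncrossing π)
include hπ

lemma rel_of_lt {a b c d : Fin n} (hab : a < b) (hbc : b < c) (hcd : c < d) (hac : π.r a c)
    (hbd : π.r b d) : π.r a b := by
  by_contra hn
  exact hπ ⟨a, b, c, d, hab, hbc, hcd, hac, hbd, hn⟩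

lemma blockMin_le_blockMin {x y : Fin n} (hyx : π.blockMin y ≤ x) (hxy : x < y) :
    π.blockMin y ≤ π.blockMin x := by
  by_contra! hlt
  have hrel : π.r (π.blockMin x) (π.blockMin y) := by
    rcases hyx.lt_or_eq with hyx | hyx
    · exact hπ.rel_of_lt hlt hyx hxy (π.symm' (rel_blockMin x)) (π.symm' (rel_blockMin y))
    · rw [hyx]; exact π.symm' (rel_blockMin x)
  rw [← blockMin_eq_blockMin_iff, blockMin_blockMin, blockMin_blockMin] at hrel
  exact hlt.ne hrel

open NCPartition in
lemma level_blockMin_le (j : Fin n) :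
    level π.blockWord (π.blockMin j) ≤ level π.blockWord (j + 1) := by
  rw [level_blockWord (π.blockMin j).isLt.le, level_blockWord j.isLt]
  refine Nat.cast_le.2 (card_le_card fun x hx => ?_)
  simp only [mem_filter, mem_univ, true_and] at hx ⊢
  have hj : (π.blockMin j : ℕ) ≤ j := blockMin_le_self j
  suffices (j : ℕ) < x by omega
  by_contra! hxj
  rcases hxj.lt_or_eq with hxj | hxj
  · exact absurd hx.2 (not_lt.2 (hπ.blockMin_le_blockMin (x := x) (y := j) hx.1 hxj))
  · rw [show x = j from Fin.ext hxj] at hx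
    omega

open NCPartition in
lemma level_lt_of_blockMin_lt {j : Fin n} {i : ℕ} (hji : (π.blockMin j : ℕ) < i)
    (hij : i ≤ j) : level π.blockWord (j + 1) < level π.blockWord i := by
  rw [level_blockWord j.isLt, level_blockWord (hij.trans j.isLt.le)]
  refine Nat.cast_lt.2 (card_lt_card ⟨fun x hx => ?_, fun h => ?_⟩)
  · simp only [mem_filter, mem_univ, true_and] at hx ⊢
    have := hπ.blockMin_le_blockMin (x := j) (y := x) (by omega) (by omega)
    exact ⟨by omega, by omega⟩
  · have := h (mem_filter.2 ⟨mem_univ j, hij, hji⟩)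
    simp at this

end IsNoncrossing

namespace NCPartition

open scoped Classical
open Setoid

section Partitions

variable {n : ℕ}

lemma isLukasiewicz_blockWord (π : Setoid (Fin n)) : IsLukasiewicz n π.blockWord := by
  refine ⟨fun k hk => by rw [level_blockWord hk]; positivity, ?_⟩
  have h := level_self π.blockWord
  rw [level_blockWord le_rfl, card_eq_zero.2 (filter_eq_empty_iff.2 fun x _ h => by omega)] at h
  omega

variable (v : Fin n → ℕ)

/-- The least element of the block of `j` in the partition coded by `v`. -/
noncomputable def opener (j : Fin n) : Fin n :=
  ⟨Nat.findGreatest (fun i => level v i ≤ level v (j + 1)) j,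
    (Nat.findGreatest_le _).trans_lt j.isLt⟩

noncomputable def toSetoid : Setoid (Fin n) := Setoid.ker (opener v)

variable {v}

lemma opener_le (j : Fin n) : opener v j ≤ j := Nat.findGreatest_le _

lemma lt_level_of_opener_lt {j : Fin n} {i : ℕ} (h₁ : (opener v j : ℕ) < i) (h₂ : i ≤ j) :
    level v (j + 1) < level v i :=
  lt_of_not_ge (Nat.findGreatest_is_greatest h₁ h₂)

lemma level_opener_le (hv : IsLukasiewicz n v) (j : Fin n) :
    level v (opener v j) ≤ level v (j + 1) :=
  Nat.findGreatest_spec (P := fun i => level v i ≤ level v (j + 1)) (Nat.zero_le _)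
    (by simpa [level] using hv.1 _ j.isLt)

lemma opener_eq_of {j m : Fin n} (hmj : m ≤ j) (hm : level v m ≤ level v (j + 1))
    (h : ∀ i : ℕ, (m : ℕ) < i → i ≤ j → level v (j + 1) < level v i) : opener v j = m :=
  Fin.ext (Nat.findGreatest_eq_iff.2 ⟨hmj, fun _ => hm, fun i h₁ h₂ => not_le.2 (h i h₁ h₂)⟩)

lemma opener_opener (hv : IsLukasiewicz n v) (j : Fin n) :
    opener v (opener v j) = opener v j := by
  refine opener_eq_of le_rfl ?_ fun i h₁ h₂ => absurd h₂ (not_le.2 h₁)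
  have hle := level_opener_le hv j
  rcases (opener_le j).lt_or_eq with h | h
  · exact hle.trans (lt_level_of_opener_lt (i := opener v j + 1) (by simp) h).le
  · rw [h] at hle ⊢; exact hle

lemma isNoncrossing_toSetoid (hv : IsLukasiewicz n v) : IsNoncrossing (toSetoid v) := by
  rintro ⟨a, b, c, d, hab, hbc, hcd, hac, hbd, hne⟩
  change opener v a = opener v c at hac
  change opener v b = opener v d at hbd
  change opener v a ≠ opener v b at hne
  have hp : (opener v c : ℕ) ≤ a := hac ▸ opener_le a
  have hq : (opener v d : ℕ) ≤ b := hbd ▸ opener_le b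
  rw [Fin.lt_def] at hab hbc hcd
  rcases lt_or_gt_of_ne (hac ▸ hbd ▸ hne) with h | h <;> rw [Fin.lt_def] at h
  · have h₁ := lt_level_of_opener_lt (j := c) (i := opener v d) h (by omega)
    have h₂ := lt_level_of_opener_lt (v := v) (j := d) (i := c + 1) (by omega) hcd
    have h₃ := level_opener_le hv d
    omega
  · have h₁ := lt_level_of_opener_lt (j := b) (i := opener v c) (by rw [hbd]; exact h) (by omega)
    have h₂ := lt_level_of_opener_lt (v := v) (j := c) (i := b + 1) (by omega) hbc
    have h₃ := level_opener_le hv c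
    omega

lemma card_opener_fiber_le (hv : IsLukasiewicz n v) (p : Fin n) :
    #{x | opener v x = p} ≤ v p := by
  -- `x ↦ level v (x + 1)` is strictly decreasing on the fibre, with values in
  -- `[level v p, level v p + v p)`.
  have hrange : ∀ x, opener v x = p →
      level v p ≤ level v (x + 1) ∧ level v (x + 1) < level v p + v p := by
    rintro x rfl
    refine ⟨level_opener_le hv x, ?_⟩
    have hstep := level_succ_val v (opener v x)
    rcases (opener_le x).lt_or_eq with h | h
    · have := lt_level_of_opener_lt (v := v) (i := opener v x + 1) (by simp) h
      omega
    · rw [h] at hstep ⊢; omega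
  have hanti : ∀ x y, opener v x = p → opener v y = p → x < y →
      level v (y + 1) < level v (x + 1) := by
    rintro x y hx rfl hxy
    have := hx ▸ opener_le x
    exact lt_level_of_opener_lt (by rw [Fin.le_def] at this; omega) hxy
  calc #{x | opener v x = p}
      ≤ #(Ico (level v p) (level v p + v p)) := by
        refine card_le_card_of_injOn (fun x => level v (x + 1)) (fun x hx => ?_) ?_
        · simpa using hrange x (by simpa using hx)
        · intro x hx y hy hxy
          replace hx : opener v x = p := by simpa using hx
          replace hy : opener v y = p := by simpa using hy
          by_contra hne
          rcases lt_or_gt_of_ne hne with h | h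
          · exact (hanti x y hx hy h).ne hxy.symm
          · exact (hanti y x hy hx h).ne hxy
    _ = v p := by simp

lemma card_opener_fiber (hv : IsLukasiewicz n v) (p : Fin n) : #{x | opener v x = p} = v p := by
  have htotal : ∑ q, #{x | opener v x = q} = ∑ q, v q := by
    rw [← card_eq_sum_card_fiberwise (fun x _ => mem_univ _), hv.2, card_univ, Fintype.card_fin]
  exact (sum_eq_sum_iff_of_le fun q _ => card_opener_fiber_le hv q).1 htotal p (mem_univ p)

lemma blockMin_toSetoid (hv : IsLukasiewicz n v) (x : Fin n) :
    (toSetoid v).blockMin x = opener v x := by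
  refine le_antisymm (blockMin_le (opener_opener hv x).symm) ?_
  calc opener v x = opener v ((toSetoid v).blockMin x) := rel_blockMin (π := toSetoid v) x
    _ ≤ (toSetoid v).blockMin x := opener_le _

lemma blockWord_toSetoid (hv : IsLukasiewicz n v) : (toSetoid v).blockWord = v := by
  ext p
  simp only [blockWord, blockMin_toSetoid hv, card_opener_fiber hv]

lemma opener_blockWord {π : Setoid (Fin n)} (hπ : IsNoncrossing π) (j : Fin n) :
    opener π.blockWord j = π.blockMin j :=
  opener_eq_of (blockMin_le_self j) (hπ.level_blockMin_le j)
    fun _ => hπ.level_lt_of_blockMin_lt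

lemma toSetoid_blockWord {π : Setoid (Fin n)} (hπ : IsNoncrossing π) :
    toSetoid π.blockWord = π := by
  ext a b
  change opener _ a = opener _ b ↔ π.r a b
  rw [opener_blockWord hπ, opener_blockWord hπ, blockMin_eq_blockMin_iff]

variable (n) in
noncomputable def ncEquiv :
    {π : Setoid (Fin n) // IsNoncrossing π} ≃ {v : Fin n → ℕ // IsLukasiewicz n v} where
  toFun π := ⟨π.1.blockWord, isLukasiewicz_blockWord π.1⟩
  invFun v := ⟨toSetoid v.1, isNoncrossing_toSetoid v.2⟩
  left_inv π := Subtype.ext (toSetoid_blockWord π.2)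
  right_inv v := Subtype.ext (blockWord_toSetoid v.2)

end Partitions

section Cycle

open scoped Fin.NatCast

variable {n : ℕ}

lemma level_init (w : Fin (n + 1) → ℕ) {k : ℕ} (hk : k ≤ n) :
    level (Fin.init w) k = level w k :=
  pathLevel_congr fun i hi => by
    simp [padZero, show i < n by omega, show i < n + 1 by omega, Fin.init]

lemma IsLukasiewicz.last_eq_zero {w : Fin (n + 1) → ℕ} (hw : IsLukasiewicz n w) :
    w (Fin.last n) = 0 := by
  have h := level_succ_val w (Fin.last n)
  rw [Fin.val_last, level_self, hw.2] at h
  have := hw.1 n le_rfl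
  omega

variable (n) in
def snocZeroEquiv (P : (Fin n → ℕ) → Prop) :
    {v // P v} ≃ {w : Fin (n + 1) → ℕ // w (Fin.last n) = 0 ∧ P (Fin.init w)} where
  toFun v := ⟨Fin.snoc v.1 0, by simp, by simpa using v.2⟩
  invFun w := ⟨Fin.init w.1, w.2.2⟩
  left_inv v := by simp
  right_inv w := Subtype.ext (by conv_rhs => rw [← Fin.snoc_init_self w.1, w.2.1])

lemma isLukasiewicz_init_iff (w : Fin (n + 1) → ℕ) :
    w (Fin.last n) = 0 ∧ IsLukasiewicz n (Fin.init w) ↔ IsLukasiewicz n w := by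
  have hsum : ∑ i, w i = ∑ i, Fin.init w i + w (Fin.last n) := Fin.sum_univ_castSucc w
  refine ⟨fun ⟨hlast, hlevel, hs⟩ => ⟨fun k hk => level_init w hk ▸ hlevel k hk, by omega⟩,
    fun hw => ⟨hw.last_eq_zero, fun k hk => (level_init w hk).symm ▸ hw.1 k hk, ?_⟩⟩
  have := hw.last_eq_zero
  have := hw.2
  omega

def rotate (c : Fin (n + 1)) (w : Fin (n + 1) → ℕ) : Fin (n + 1) → ℕ := fun i => w (i + c)

@[simp] lemma rotate_zero (w : Fin (n + 1) → ℕ) : rotate 0 w = w := by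
  ext i; simp [rotate]

lemma rotate_rotate (a b : Fin (n + 1)) (w : Fin (n + 1) → ℕ) :
    rotate a (rotate b w) = rotate (a + b) w := by
  ext i; simp [rotate, add_assoc]

lemma sum_rotate (c : Fin (n + 1)) (w : Fin (n + 1) → ℕ) : ∑ i, rotate c w i = ∑ i, w i :=
  Fintype.sum_equiv (Equiv.addRight c) _ _ fun _ => rfl

/-- The path of the periodic extension of `w` (positions are read modulo `n + 1`). -/
def cyclicLevel (w : Fin (n + 1) → ℕ) : ℕ → ℤ := pathLevel fun i => w i

lemma cyclicLevel_add_period {w : Fin (n + 1) → ℕ} (hs : ∑ i, w i = n) (m : ℕ) :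
    cyclicLevel w (m + (n + 1)) = cyclicLevel w m - 1 := by
  have hperiod :
      pathLevel (fun i => w (m + i : ℕ)) (n + 1) = ∑ i : Fin (n + 1), ((w i : ℤ) - 1) := by
    rw [pathLevel, ← Fin.sum_univ_eq_sum_range (fun i => ((w (m + i : ℕ) : ℤ) - 1))]
    exact Fintype.sum_equiv (Equiv.addLeft (m : Fin (n + 1))) _ _ fun i => by simp
  rw [cyclicLevel, pathLevel_add, hperiod, sum_sub_distrib, ← Nat.cast_sum, hs]
  simp only [sum_const, card_univ, Fintype.card_fin, nsmul_eq_mul, mul_one]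
  push_cast
  ring

lemma level_rotate (c : Fin (n + 1)) (w : Fin (n + 1) → ℕ) {k : ℕ} (hk : k ≤ n + 1) :
    level (rotate c w) k = cyclicLevel w (c + k) - cyclicLevel w c := by
  rw [cyclicLevel, pathLevel_add, add_sub_cancel_left, level]
  refine pathLevel_congr fun i hi => ?_
  simp [padZero, show i < n + 1 by omega, rotate, ← Fin.natCast_eq_mk, add_comm]

def IsGoodStart (w : Fin (n + 1) → ℕ) (c : ℕ) : Prop :=
  ∀ k ≤ n, cyclicLevel w c ≤ cyclicLevel w (c + k)

lemma isLukasiewicz_rotate_iff {w : Fin (n + 1) → ℕ} (hs : ∑ i, w i = n) (c : Fin (n + 1)) :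
    IsLukasiewicz n (rotate c w) ↔ IsGoodStart w c := by
  rw [IsLukasiewicz, sum_rotate, and_iff_left hs]
  exact forall₂_congr fun k hk => by rw [level_rotate c w (by omega), sub_nonneg]

/-- The first minimum of the path within a period is a good start. -/
lemma exists_isGoodStart {w : Fin (n + 1) → ℕ} (hs : ∑ i, w i = n) :
    ∃ c ≤ n, IsGoodStart w c := by
  have hmin : ∃ c, c ≤ n ∧ ∀ m ≤ n, cyclicLevel w c ≤ cyclicLevel w m := by
    obtain ⟨c, hc, h⟩ := (range (n + 1)).exists_min_image (cyclicLevel w) ⟨0, by simp⟩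
    exact ⟨c, by simpa [Nat.lt_succ_iff] using hc, fun m hm => h m (by simp; omega)⟩
  obtain ⟨hc, hcmin⟩ := Nat.find_spec hmin
  refine ⟨Nat.find hmin, hc, fun k _ => ?_⟩
  by_cases h : Nat.find hmin + k ≤ n
  · exact hcmin _ h
  obtain ⟨m, hm, hlt⟩ :
      ∃ m ≤ n, cyclicLevel w m < cyclicLevel w (Nat.find hmin + k - (n + 1)) := by
    have := Nat.find_min hmin (m := Nat.find hmin + k - (n + 1)) (by omega)
    push Not at this
    exact this (by omega)
  rw [show Nat.find hmin + k = Nat.find hmin + k - (n + 1) + (n + 1) by omega,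
    cyclicLevel_add_period hs]
  have := hcmin m hm
  omega

lemma IsGoodStart.eq {w : Fin (n + 1) → ℕ} (hs : ∑ i, w i = n) {c c' : ℕ}
    (h : IsGoodStart w c) (h' : IsGoodStart w c') (hc : c ≤ n) (hc' : c' ≤ n) : c = c' := by
  wlog hlt : c < c' generalizing c c'
  · rcases (not_lt.1 hlt).lt_or_eq with hlt | heq
    · exact (this h' h hc' hc hlt).symm
    · exact heq.symm
  have h₁ := h (c' - c) (by omega)
  have h₂ := h' (c + (n + 1) - c') (by omega)
  rw [show c + (c' - c) = c' by omega] at h₁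
  rw [show c' + (c + (n + 1) - c') = c + (n + 1) by omega, cyclicLevel_add_period hs] at h₂
  omega

theorem existsUnique_isLukasiewicz_rotate {w : Fin (n + 1) → ℕ} (hs : ∑ i, w i = n) :
    ∃! c : Fin (n + 1), IsLukasiewicz n (rotate c w) := by
  simp only [isLukasiewicz_rotate_iff hs]
  obtain ⟨c, hc, hgood⟩ := exists_isGoodStart hs
  exact ⟨⟨c, by omega⟩, hgood, fun c' hc' => Fin.ext (hc'.eq hs hgood (by omega) hc)⟩

/-- Meaningful only when `∑ i, w i = n`. -/
noncomputable def goodRotation (w : Fin (n + 1) → ℕ) : Fin (n + 1) :=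
  Classical.epsilon fun c => IsLukasiewicz n (rotate c w)

lemma isLukasiewicz_rotate_goodRotation {w : Fin (n + 1) → ℕ} (hs : ∑ i, w i = n) :
    IsLukasiewicz n (rotate (goodRotation w) w) :=
  Classical.epsilon_spec (existsUnique_isLukasiewicz_rotate hs).exists

lemma goodRotation_eq {w : Fin (n + 1) → ℕ} (hs : ∑ i, w i = n) {c : Fin (n + 1)}
    (hc : IsLukasiewicz n (rotate c w)) : goodRotation w = c :=
  (existsUnique_isLukasiewicz_rotate hs).unique (isLukasiewicz_rotate_goodRotation hs) hc

variable (n) in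
noncomputable def rotateEquiv (Q : (Fin (n + 1) → ℕ) → Prop)
    (hQ : ∀ c w, Q w → Q (rotate c w)) :
    {w // IsLukasiewicz n w ∧ Q w} × Fin (n + 1) ≃ {w // ∑ i, w i = n ∧ Q w} where
  toFun p := ⟨rotate (-p.2) p.1.1, (sum_rotate _ _).trans p.1.2.1.2, hQ _ _ p.1.2.2⟩
  invFun w := (⟨rotate (goodRotation w.1) w.1, isLukasiewicz_rotate_goodRotation w.2.1,
    hQ _ _ w.2.2⟩, goodRotation w.1)
  left_inv := by
    rintro ⟨⟨u, hu, hQu⟩, d⟩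
    have hd : goodRotation (rotate (-d) u) = d :=
      goodRotation_eq ((sum_rotate _ _).trans hu.2) (by simpa [rotate_rotate] using hu)
    ext <;> simp [hd, rotate_rotate]
  right_inv w := Subtype.ext (by simp [rotate_rotate])

lemma card_isLukasiewicz_mul (Q : (Fin (n + 1) → ℕ) → Prop)
    (hQ : ∀ c w, Q w → Q (rotate c w)) :
    Nat.card {w // IsLukasiewicz n w ∧ Q w} * (n + 1) =
      Nat.card {w : Fin (n + 1) → ℕ // ∑ i, w i = n ∧ Q w} := by
  rw [← Nat.card_congr (rotateEquiv n Q hQ), Nat.card_prod,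
    Nat.card_eq_fintype_card (α := Fin _), Fintype.card_fin]

end Cycle

section Counting

variable {α : Type*} [Fintype α]

noncomputable def supportEquiv (l : ℕ) (s : Finset α) :
    {u : α → ℕ // ∑ a, u a = l ∧ ({a | u a ≠ 0} : Finset α) = s} ≃
      {g : s → ℕ // ∑ a, g a + #s = l} where
  toFun u := ⟨fun a => u.1 a - 1, by
    obtain ⟨u, hl, rfl⟩ := u
    calc ∑ a : ({a | u a ≠ 0} : Finset α), (u a - 1) + #{a | u a ≠ 0}
        = ∑ a : ({a | u a ≠ 0} : Finset α), (u a - 1 + 1) := by simp [sum_add_distrib]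
      _ = ∑ a : ({a | u a ≠ 0} : Finset α), u a :=
        sum_congr rfl fun a _ => by have := (mem_filter.1 a.2).2; omega
      _ = ∑ a ∈ {a | u a ≠ 0}, u a := sum_coe_sort _ _
      _ = l := by rw [sum_filter_ne_zero, hl]⟩
  invFun g := ⟨fun a => if h : a ∈ s then g.1 ⟨a, h⟩ + 1 else 0, by
    refine ⟨?_, by ext a; by_cases h : a ∈ s <;> simp [h]⟩
    obtain ⟨g, rfl⟩ := g
    calc ∑ a, (if h : a ∈ s then g ⟨a, h⟩ + 1 else 0)
        = ∑ a ∈ s, (if h : a ∈ s then g ⟨a, h⟩ + 1 else 0) :=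
          (sum_subset (subset_univ s) fun a _ h => dif_neg h).symm
      _ = ∑ a : s, (g a + 1) :=
          (sum_coe_sort s _).symm.trans (sum_congr rfl fun a _ => dif_pos a.2)
      _ = ∑ a, g a + #s := by simp [sum_add_distrib]⟩
  left_inv u := by
    obtain ⟨u, hl, rfl⟩ := u
    ext a
    by_cases h : u a = 0 <;> simp [h]
    omega
  right_inv g := by ext a; simp

noncomputable def supportFiberEquiv {l : ℕ} {s : Finset α} (hs : #s ≤ l) :
    {u : α → ℕ // ∑ a, u a = l ∧ ({a | u a ≠ 0} : Finset α) = s} ≃ Sym s (l - #s) :=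
  (supportEquiv l s).trans <| (Equiv.subtypeEquivRight fun _ => by omega).trans
    (Sym.equivNatSumOfFintype s (l - #s)).symm

lemma card_sum_eq_and_card_support_eq {l r : ℕ} (hr : r ≤ l) :
    Nat.card {u : α → ℕ // ∑ a, u a = l ∧ #{a | u a ≠ 0} = r} =
      (Fintype.card α).choose r * r.multichoose (l - r) := by
  let e : {u : α → ℕ // ∑ a, u a = l ∧ #{a | u a ≠ 0} = r} ≃
      Σ s : {s : Finset α // #s = r},
        {u : α → ℕ // ∑ a, u a = l ∧ ({a | u a ≠ 0} : Finset α) = s.1} :=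
    { toFun u := ⟨⟨_, u.2.2⟩, u.1, u.2.1, rfl⟩
      invFun p := ⟨p.2.1, p.2.2.1, by rw [p.2.2.2]; exact p.1.2⟩
      left_inv u := rfl
      right_inv p := Sigma.subtype_ext (Subtype.ext p.2.2.2) rfl }
  rw [Nat.card_congr (e.trans (Equiv.sigmaCongrRight fun s =>
    supportFiberEquiv (s.2.trans_le hr))), Nat.card_sigma]
  simp only [Nat.card_eq_fintype_card, Sym.card_sym_eq_multichoose, Fintype.card_coe]
  rw [sum_congr rfl fun s _ => by rw [s.2], sum_const, card_univ, Fintype.card_finset_len,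
    smul_eq_mul]

def IsEvenWord (r : ℕ) (w : α → ℕ) : Prop := (∀ a, Even (w a)) ∧ #{a | w a ≠ 0} = r

noncomputable def halveEquiv (l r : ℕ) :
    {w : α → ℕ // ∑ a, w a = 2 * l ∧ IsEvenWord r w} ≃
      {u : α → ℕ // ∑ a, u a = l ∧ #{a | u a ≠ 0} = r} where
  toFun w := ⟨fun a => w.1 a / 2, by
    obtain ⟨w, hs, heven, hr⟩ := w
    have hw : ∀ a, 2 * (w a / 2) = w a := fun a => Nat.two_mul_div_two_of_even (heven a)
    dsimp only
    refine ⟨?_, hr ▸ congrArg card (filter_congr fun a _ => by have := hw a; omega)⟩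
    have : 2 * ∑ a, w a / 2 = 2 * l := by rw [mul_sum, sum_congr rfl fun a _ => hw a, hs]
    omega⟩
  invFun u := ⟨fun a => 2 * u.1 a, by rw [← mul_sum, u.2.1], fun a => even_two_mul _,
    (congrArg card (filter_congr fun a _ => by simp)).trans u.2.2⟩
  left_inv w := Subtype.ext (funext fun a => Nat.two_mul_div_two_of_even (w.2.2.1 a))
  right_inv u := Subtype.ext (funext fun a => by simp)

lemma card_sum_eq_two_mul_isEvenWord {l r : ℕ} (hr : 1 ≤ r) (hrl : r ≤ l) :
    Nat.card {w : α → ℕ // ∑ a, w a = 2 * l ∧ IsEvenWord r w} =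
      (Fintype.card α).choose r * (l - 1).choose (r - 1) := by
  rw [Nat.card_congr (halveEquiv l r), card_sum_eq_and_card_support_eq hrl, Nat.multichoose_eq,
    show r + (l - r) - 1 = l - 1 by omega, show l - r = l - 1 - (r - 1) by omega,
    Nat.choose_symm (by omega)]

lemma isEvenWord_comp_equiv {β : Type*} [Fintype β] (e : α ≃ β) (r : ℕ) (w : β → ℕ) :
    IsEvenWord r (w ∘ e) ↔ IsEvenWord r w := by
  refine and_congr ⟨fun h b => by simpa using h (e.symm b), fun h a => h (e a)⟩ ?_
  rw [card_filter, card_filter]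
  exact iff_of_eq (congrArg (· = r) (Fintype.sum_equiv e _ _ fun _ => rfl))

end Counting

lemma isEvenWord_init_iff {n r : ℕ} {w : Fin (n + 1) → ℕ} (hw : w (Fin.last n) = 0) :
    IsEvenWord r (Fin.init w) ↔ IsEvenWord r w := by
  refine and_congr ⟨fun h => Fin.forall_fin_succ'.2 ⟨h, hw ▸ Even.zero⟩, fun h i => h _⟩ ?_
  rw [card_filter, card_filter, Fin.sum_univ_castSucc, hw]
  simp only [ne_eq, not_true_eq_false, if_false, add_zero]
  rfl

variable (n r : ℕ)

noncomputable def evenNCEquiv :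
    {π : Setoid (Fin n) // IsNoncrossing π ∧ (∀ i, Even (Nat.card {j : Fin n // π.r i j})) ∧
      nblocks π = r} ≃ {v : Fin n → ℕ // IsLukasiewicz n v ∧ IsEvenWord r v} :=
  (Equiv.subtypeSubtypeEquivSubtypeInter _ _).symm.trans <|
    ((ncEquiv n).subtypeEquiv fun π => and_congr even_blockWord_iff.symm
      (by rw [← card_blockWord_ne_zero]; rfl)).trans
    (Equiv.subtypeSubtypeEquivSubtypeInter _ _)

noncomputable def lukasiewiczSnocEquiv :
    {v : Fin n → ℕ // IsLukasiewicz n v ∧ IsEvenWord r v} ≃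
      {w : Fin (n + 1) → ℕ // IsLukasiewicz n w ∧ IsEvenWord r w} :=
  (snocZeroEquiv n _).trans <| Equiv.subtypeEquivRight fun w => by
    rw [← isLukasiewicz_init_iff, ← and_assoc]
    exact ⟨fun h => ⟨h.1, (isEvenWord_init_iff h.1.1).1 h.2⟩,
      fun h => ⟨h.1, (isEvenWord_init_iff h.1.1).2 h.2⟩⟩

lemma card_evenNC_mul :
    Nat.card {π : Setoid (Fin n) // IsNoncrossing π ∧
        (∀ i, Even (Nat.card {j : Fin n // π.r i j})) ∧ nblocks π = r} * (n + 1) =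
      Nat.card {w : Fin (n + 1) → ℕ // ∑ i, w i = n ∧ IsEvenWord r w} := by
  rw [Nat.card_congr ((evenNCEquiv n r).trans (lukasiewiczSnocEquiv n r))]
  exact card_isLukasiewicz_mul (IsEvenWord r)
    fun c w => (isEvenWord_comp_equiv (Equiv.addRight c) r w).2

end NCPartition

/-- The number of noncrossing partitions of `{1,…,2l}` with all blocks of even size and
exactly `r` blocks equals `(1/r)·binom(l-1,r-1)·binom(2l,r-1)`. -/
theorem card_nc_even_partitions_with_r_blocks (l r : ℕ) (hr1 : 1 ≤ r) (hrl : r ≤ l) :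
    r * Nat.card {π : Setoid (Fin (2 * l)) //
        IsNoncrossing π ∧ (∀ i, Even (Nat.card {j : Fin (2 * l) // π.r i j})) ∧
        nblocks π = r} =
      (l - 1).choose (r - 1) * (2 * l).choose (r - 1) := by
  have hcount := NCPartition.card_evenNC_mul (2 * l) r
  rw [NCPartition.card_sum_eq_two_mul_isEvenWord hr1 hrl, Fintype.card_fin] at hcount
  have hpascal := Nat.add_one_mul_choose_eq (2 * l) (r - 1)
  rw [Nat.sub_add_cancel hr1] at hpascal
  apply Nat.eq_of_mul_eq_mul_left (Nat.succ_pos (2 * l))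
  calc (2 * l + 1) * (r * _) = r * ((2 * l + 1).choose r * (l - 1).choose (r - 1)) := by
        rw [← hcount]; ring
    _ = (2 * l + 1) * ((l - 1).choose (r - 1) * (2 * l).choose (r - 1)) := by
        rw [← mul_assoc, mul_comm r, ← hpascal]; ring
end
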